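/- arXiv:1302.2018 — 5 statements merged into one kernel-verified Lean document; each statement's English description precedes it below -/
import Mathlib

section
/- Let p ≥ 1 be an integer, λ ∈ [0,1], and let F be a polyharmonic mapping of class HS_p(λ) on the unit disk 𝔻. Then F is univalent (injective) on 𝔻 and sense-preserving on 𝔻, i.e., viewing F as a map from 𝔻 ⊂ ℝ² to ℝ², the determinant of its real Fréchet derivative is positive at every point of 𝔻. -/
open Complex Metric Set

/-- The polyharmonic mapping associated to coefficients `a b : ℕ → ℕ → ℂ`
(`a n k` is the coefficient `a_{n,k}`):
`F(z) = Σ_{k=1}^p |z|^{2(k-1)} Σ_{n=1}^∞ (a_{n,k} z^n + conj(b_{n,k}) conj(z)^n)`. -/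
noncomputable def polyF (p : ℕ) (a b : ℕ → ℕ → ℂ) (z : ℂ) : ℂ :=
  ∑ k ∈ Finset.Icc 1 p, ((‖z‖ : ℂ)) ^ (2 * (k - 1)) *
    ∑' n : ℕ, if 1 ≤ n then
      a n k * z ^ n + (starRingEnd ℂ) (b n k) * ((starRingEnd ℂ) z) ^ n else 0

/-- The coefficient conditions defining the class `HS_p(λ)`. -/
def HSLam (p : ℕ) (lam : ℝ) (a b : ℕ → ℕ → ℂ) : Prop :=
  a 1 1 = 1 ∧
  (∀ k ∈ Finset.Icc 1 p,
    Summable (fun n : ℕ => ‖a n k‖ + ‖b n k‖)) ∧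
  (∀ k ∈ Finset.Icc 1 p, Summable (fun n : ℕ =>
    if 2 ≤ n then (2 * ((k : ℝ) - 1) + n * (lam * n + 1 - lam)) *
      (‖a n k‖ + ‖b n k‖) else 0)) ∧
  (∑ k ∈ Finset.Icc 1 p, ∑' n : ℕ,
      (if 2 ≤ n then (2 * ((k : ℝ) - 1) + n * (lam * n + 1 - lam)) *
        (‖a n k‖ + ‖b n k‖) else 0))
    ≤ 2 - ∑ k ∈ Finset.Icc 1 p,
        (2 * (k : ℝ) - 1) * (‖a 1 k‖ + ‖b 1 k‖) ∧
  1 ≤ ∑ k ∈ Finset.Icc 1 p,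
        (2 * (k : ℝ) - 1) * (‖a 1 k‖ + ‖b 1 k‖) ∧
  ∑ k ∈ Finset.Icc 1 p,
        (2 * (k : ℝ) - 1) * (‖a 1 k‖ + ‖b 1 k‖) < 2


/-!
Write `F = z + conj(b₁₁) conj z + R`, where the remaining terms of `R` are monomials
`z^m conj(z)^j` of total degree `d = n + 2(k-1) ≥ 2`. The Wirtinger derivatives of such a term are
bounded by `d (|a_{n,k}| + |b_{n,k}|) |z|` on the closed disk, and the `HS_p(λ)` inequality (with
`a₁₁ = 1`) bounds the sum of these weights by `1 - |b₁₁|`, so `|R_z| + |R_z̄| ≤ |z| (1 - |b₁₁|)`.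

Injectivity: on `|z| ≤ r < 1` the map `R` is `r (1 - |b₁₁|)`-Lipschitz, while the leading term
moves points apart by at least `(1 - |b₁₁|) |z₁ - z₂|`, and `|b₁₁| < 1`.
Orientation: `|F_z| ≥ 1 - |R_z| > |b₁₁| + |R_z̄| ≥ |F_z̄|`, and the Jacobian is `|F_z|² - |F_z̄|²`.
-/

open scoped ComplexConjugate

noncomputable section

/-- Every `ℝ`-linear map `ℂ → ℂ` is `wirtingerCLM α β` for unique `α, β`; for a derivative of `f`
these are the Wirtinger derivatives `∂f/∂z` and `∂f/∂z̄`. -/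
def wirtingerCLM (α β : ℂ) : ℂ →L[ℝ] ℂ :=
  α • ContinuousLinearMap.id ℝ ℂ + β • conjCLE.toContinuousLinearMap

@[simp]
lemma wirtingerCLM_apply (α β v : ℂ) : wirtingerCLM α β v = α * v + β * conj v := rfl

@[simp]
lemma wirtingerCLM_zero : wirtingerCLM 0 0 = 0 := by
  ext1 v
  simp

lemma norm_wirtingerCLM_le (α β : ℂ) : ‖wirtingerCLM α β‖ ≤ ‖α‖ + ‖β‖ :=
  ContinuousLinearMap.opNorm_le_bound _ (by positivity) fun v => by
    simpa [add_mul] using norm_add_le (α * v) (β * conj v)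

lemma det_wirtingerCLM (α β : ℂ) :
    LinearMap.det (wirtingerCLM α β : ℂ →ₗ[ℝ] ℂ) = normSq α - normSq β := by
  rw [← LinearMap.det_toMatrix basisOneI, Matrix.det_fin_two]
  simp [LinearMap.toMatrix_apply, normSq_apply, ContinuousLinearMap.coe_coe]
  ring

lemma tsum_wirtingerCLM {ι : Type*} {α β : ι → ℂ} (hα : Summable α) (hβ : Summable β) :
    ∑' i, wirtingerCLM (α i) (β i) = wirtingerCLM (∑' i, α i) (∑' i, β i) := by
  simp only [wirtingerCLM]
  rw [Summable.tsum_add (hα.smul_const _) (hβ.smul_const _), Summable.tsum_smul_const hα,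
    Summable.tsum_smul_const hβ]

section PairMonomial

variable (c₁ c₂ : ℂ) (m j : ℕ)

def pairMonomial (z : ℂ) : ℂ := c₁ * (z ^ m * conj z ^ j) + c₂ * (z ^ j * conj z ^ m)

def pairMonomialDz (z : ℂ) : ℂ :=
  c₁ * (m * z ^ (m - 1) * conj z ^ j) + c₂ * (j * z ^ (j - 1) * conj z ^ m)

def pairMonomialDzbar (z : ℂ) : ℂ :=
  c₁ * (j * z ^ m * conj z ^ (j - 1)) + c₂ * (m * z ^ j * conj z ^ (m - 1))

lemma hasFDerivAt_pow_mul_conj_pow (z : ℂ) :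
    HasFDerivAt (fun w : ℂ => w ^ m * conj w ^ j)
      (wirtingerCLM (m * z ^ (m - 1) * conj z ^ j) (j * z ^ m * conj z ^ (j - 1))) z := by
  have hpow := (hasDerivAt_pow m z).hasFDerivAt.restrictScalars ℝ
  have hconj := ((hasDerivAt_pow j (conj z)).hasFDerivAt.restrictScalars ℝ).comp z
    conjCLE.toContinuousLinearMap.hasFDerivAt
  refine (hpow.mul hconj).congr_fderiv ?_
  ext v
  simp
  ring

lemma hasFDerivAt_pairMonomial (z : ℂ) :
    HasFDerivAt (pairMonomial c₁ c₂ m j)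
      (wirtingerCLM (pairMonomialDz c₁ c₂ m j z) (pairMonomialDzbar c₁ c₂ m j z)) z := by
  refine (((hasFDerivAt_pow_mul_conj_pow m j z).const_mul c₁).add
    ((hasFDerivAt_pow_mul_conj_pow j m z).const_mul c₂)).congr_fderiv ?_
  ext v
  simp [pairMonomialDz, pairMonomialDzbar]
  ring

variable {c₁ c₂ m j}

lemma norm_pairMonomial_le {z : ℂ} (hz : ‖z‖ ≤ 1) :
    ‖pairMonomial c₁ c₂ m j z‖ ≤ ‖c₁‖ + ‖c₂‖ := by
  have hpow : ∀ e, ‖z‖ ^ e ≤ 1 := fun e => pow_le_one₀ (norm_nonneg z) hz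
  refine (norm_add_le _ _).trans (add_le_add ?_ ?_) <;>
  · simp only [norm_mul, norm_pow, RCLike.norm_conj]
    exact mul_le_of_le_one_right (norm_nonneg _)
      (by simpa [← pow_add] using hpow _)

lemma norm_pairMonomialDz_add_norm_pairMonomialDzbar_le (z : ℂ) :
    ‖pairMonomialDz c₁ c₂ m j z‖ + ‖pairMonomialDzbar c₁ c₂ m j z‖
      ≤ (‖c₁‖ + ‖c₂‖) * ((m + j : ℕ) * ‖z‖ ^ (m + j - 1)) := by
  have key : ∀ e f : ℕ, e + f = m + j → ‖(e : ℂ) * z ^ (e - 1) * conj z ^ f‖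
      = e * ‖z‖ ^ (m + j - 1) := by
    rintro (_ | e) f h
    · simp
    · rw [← h, show e + 1 + f - 1 = e + f by omega, Nat.add_sub_cancel, pow_add]
      simp only [norm_mul, norm_pow, RCLike.norm_conj, Complex.norm_natCast]
      ring
  have key' : ∀ e f : ℕ, e + f = m + j → ‖(e : ℂ) * z ^ f * conj z ^ (e - 1)‖
      = e * ‖z‖ ^ (m + j - 1) := by
    intro e f h
    rw [← key e f h]
    simp only [norm_mul, norm_pow, RCLike.norm_conj]
    ring
  have hDz : ‖pairMonomialDz c₁ c₂ m j z‖
      ≤ ‖c₁‖ * (m * ‖z‖ ^ (m + j - 1)) + ‖c₂‖ * (j * ‖z‖ ^ (m + j - 1)) := by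
    refine (norm_add_le _ _).trans_eq ?_
    rw [norm_mul c₁, norm_mul c₂, key m j rfl, key j m (Nat.add_comm j m)]
  have hDzbar : ‖pairMonomialDzbar c₁ c₂ m j z‖
      ≤ ‖c₁‖ * (j * ‖z‖ ^ (m + j - 1)) + ‖c₂‖ * (m * ‖z‖ ^ (m + j - 1)) := by
    refine (norm_add_le _ _).trans_eq ?_
    rw [norm_mul c₁, norm_mul c₂, key' j m (Nat.add_comm j m), key' m j rfl]
  push_cast
  linarith

end PairMonomial

lemma sub_norm_mul_norm_le_norm_add_mul_conj (β₀ v : ℂ) :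
    (1 - ‖β₀‖) * ‖v‖ ≤ ‖v + β₀ * conj v‖ := by
  have := norm_sub_norm_le v (-(β₀ * conj v))
  simp only [norm_neg, norm_mul, RCLike.norm_conj, sub_neg_eq_add] at this
  linarith

section Perturbation

variable {f R α β : ℂ → ℂ} {β₀ : ℂ}

theorem injOn_ball_of_eqOn_add (hβ₀ : ‖β₀‖ < 1)
    (hR : ∀ z ∈ ball (0 : ℂ) 1, HasFDerivAt R (wirtingerCLM (α z) (β z)) z)
    (hαβ : ∀ z ∈ ball (0 : ℂ) 1, ‖α z‖ + ‖β z‖ ≤ ‖z‖ * (1 - ‖β₀‖))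
    (hf : EqOn f (fun z => z + β₀ * conj z + R z) (ball 0 1)) :
    InjOn f (ball 0 1) := by
  intro z₁ hz₁ z₂ hz₂ heq
  set r := max ‖z₁‖ ‖z₂‖
  have hr : r < 1 := max_lt (mem_ball_zero_iff.mp hz₁) (mem_ball_zero_iff.mp hz₂)
  have hsub : closedBall (0 : ℂ) r ⊆ ball 0 1 := closedBall_subset_ball hr
  have hlip : ‖R z₂ - R z₁‖ ≤ r * (1 - ‖β₀‖) * ‖z₂ - z₁‖ := by
    refine (convex_closedBall 0 r).norm_image_sub_le_of_norm_hasFDerivWithin_le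
      (fun w hw => (hR w (hsub hw)).hasFDerivWithinAt) (fun w hw => ?_) ?_ ?_
    · refine (norm_wirtingerCLM_le _ _).trans ((hαβ w (hsub hw)).trans ?_)
      exact mul_le_mul_of_nonneg_right (mem_closedBall_zero_iff.mp hw) (by linarith)
    · exact mem_closedBall_zero_iff.mpr (le_max_left _ _)
    · exact mem_closedBall_zero_iff.mpr (le_max_right _ _)
  have hlead : z₁ - z₂ + β₀ * conj (z₁ - z₂) = R z₂ - R z₁ := by
    have := (hf hz₁).symm.trans (heq.trans (hf hz₂))
    rw [map_sub]
    linear_combination this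
  have hco := sub_norm_mul_norm_le_norm_add_mul_conj β₀ (z₁ - z₂)
  rw [hlead, norm_sub_rev z₁] at hco
  have hkey : (1 - r) * (1 - ‖β₀‖) * ‖z₂ - z₁‖ ≤ 0 := by linarith
  have hpos : 0 < (1 - r) * (1 - ‖β₀‖) := mul_pos (by linarith) (by linarith)
  have : ‖z₂ - z₁‖ = 0 := le_antisymm (nonpos_of_mul_nonpos_right hkey hpos) (norm_nonneg _)
  exact (sub_eq_zero.mp (norm_eq_zero.mp this)).symm

theorem exists_hasFDerivAt_det_pos_of_eqOn_add (hβ₀ : ‖β₀‖ < 1)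
    (hR : ∀ z ∈ ball (0 : ℂ) 1, HasFDerivAt R (wirtingerCLM (α z) (β z)) z)
    (hαβ : ∀ z ∈ ball (0 : ℂ) 1, ‖α z‖ + ‖β z‖ ≤ ‖z‖ * (1 - ‖β₀‖))
    (hf : EqOn f (fun z => z + β₀ * conj z + R z) (ball 0 1)) {z : ℂ} (hz : z ∈ ball 0 1) :
    ∃ f' : ℂ →L[ℝ] ℂ, HasFDerivAt f f' z ∧ 0 < LinearMap.det (f' : ℂ →ₗ[ℝ] ℂ) := by
  refine ⟨wirtingerCLM (1 + α z) (β₀ + β z), ?_, ?_⟩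
  · have hlin : HasFDerivAt (fun z => z + β₀ * conj z) (wirtingerCLM 1 β₀) z := by
      convert (wirtingerCLM 1 β₀).hasFDerivAt using 1
      ext w
      simp
    refine ((hlin.add (hR z hz)).congr_of_eventuallyEq
      (hf.eventuallyEq_of_mem (isOpen_ball.mem_nhds hz))).congr_fderiv ?_
    ext v
    simp only [add_apply, wirtingerCLM_apply]
    ring
  · have hlt : ‖β₀ + β z‖ < ‖1 + α z‖ := by
      have h₁ := norm_add_le β₀ (β z)
      have h₂ := norm_sub_norm_le 1 (-α z)
      simp only [norm_one, norm_neg, sub_neg_eq_add] at h₂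
      nlinarith [hαβ z hz, mem_ball_zero_iff.mp hz, norm_nonneg z]
    rw [det_wirtingerCLM, normSq_eq_norm_sq, normSq_eq_norm_sq, sub_pos]
    exact pow_lt_pow_left₀ hlt (norm_nonneg _) two_ne_zero

end Perturbation

theorem hasSum_ite_mem_of_summable_rows {α β E : Type*} [DecidableEq α] [AddCommMonoid E]
    [TopologicalSpace E] [ContinuousAdd E] {s : Finset α} {f : α → β → E}
    (hf : ∀ k ∈ s, Summable (f k)) :
    HasSum (fun i : α × β => if i.1 ∈ s then f i.1 i.2 else 0) (∑ k ∈ s, ∑' n, f k n) := by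
  have hrow : ∀ k ∈ s,
      HasSum (fun i : α × β => if i.1 = k then f k i.2 else 0) (∑' n, f k n) := by
    intro k hk
    refine ((Prod.mk_right_injective k).hasSum_iff ?_).mp ?_
    · rintro ⟨k', n⟩ hi
      simp only [Set.mem_range, Prod.mk.injEq, not_exists, not_and] at hi
      exact if_neg fun h => hi n h.symm rfl
    · simpa [Function.comp_def] using (hf k hk).hasSum
  convert hasSum_sum hrow using 1
  funext i
  rw [Finset.sum_ite_eq]

section Series

variable (p : ℕ) (a b : ℕ → ℕ → ℂ)

/-- The term `i = (k, n)` of `polyF`, with the factor `|z|^{2(k-1)} = z^{k-1} conj(z)^{k-1}`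
multiplied in. -/
def polyTerm (i : ℕ × ℕ) : ℂ → ℂ :=
  if i.1 ∈ Finset.Icc 1 p ∧ 1 ≤ i.2 then
    pairMonomial (a i.2 i.1) (conj (b i.2 i.1)) (i.2 + (i.1 - 1)) (i.1 - 1)
  else 0

def polyTermDz (i : ℕ × ℕ) (z : ℂ) : ℂ :=
  if i.1 ∈ Finset.Icc 1 p ∧ 1 ≤ i.2 then
    pairMonomialDz (a i.2 i.1) (conj (b i.2 i.1)) (i.2 + (i.1 - 1)) (i.1 - 1) z
  else 0

def polyTermDzbar (i : ℕ × ℕ) (z : ℂ) : ℂ :=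
  if i.1 ∈ Finset.Icc 1 p ∧ 1 ≤ i.2 then
    pairMonomialDzbar (a i.2 i.1) (conj (b i.2 i.1)) (i.2 + (i.1 - 1)) (i.1 - 1) z
  else 0

/-- Bounds the term `i` and its two Wirtinger derivatives on the closed unit disk. -/
def polyWeight (i : ℕ × ℕ) : ℝ :=
  if i.1 ∈ Finset.Icc 1 p ∧ 1 ≤ i.2 then
    ((i.2 + (i.1 - 1) + (i.1 - 1) : ℕ) : ℝ) * (‖a i.2 i.1‖ + ‖b i.2 i.1‖)
  else 0

variable {p a b}

lemma polyWeight_nonneg (i : ℕ × ℕ) : 0 ≤ polyWeight p a b i := by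
  unfold polyWeight
  split_ifs <;> positivity

lemma hasFDerivAt_polyTerm (i : ℕ × ℕ) (z : ℂ) :
    HasFDerivAt (polyTerm p a b i)
      (wirtingerCLM (polyTermDz p a b i z) (polyTermDzbar p a b i z)) z := by
  by_cases hi : i.1 ∈ Finset.Icc 1 p ∧ 1 ≤ i.2
  · simp only [polyTerm, polyTermDz, polyTermDzbar, if_pos hi]
    exact hasFDerivAt_pairMonomial _ _ _ _ z
  · simp only [polyTerm, polyTermDz, polyTermDzbar, if_neg hi]
    rw [wirtingerCLM_zero]
    exact hasFDerivAt_const (0 : ℂ) z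

lemma norm_polyTerm_le {z : ℂ} (hz : ‖z‖ ≤ 1) (i : ℕ × ℕ) :
    ‖polyTerm p a b i z‖ ≤ polyWeight p a b i := by
  unfold polyTerm polyWeight
  split_ifs with hi
  · refine (norm_pairMonomial_le hz).trans ?_
    rw [RCLike.norm_conj]
    have hdeg : (1 : ℝ) ≤ ((i.2 + (i.1 - 1) + (i.1 - 1) : ℕ) : ℝ) := by
      exact_mod_cast (by omega : 1 ≤ i.2 + (i.1 - 1) + (i.1 - 1))
    exact le_mul_of_one_le_left (by positivity) hdeg
  · simp

lemma norm_polyTermDz_add_norm_polyTermDzbar_le (z : ℂ) (i : ℕ × ℕ) :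
    ‖polyTermDz p a b i z‖ + ‖polyTermDzbar p a b i z‖
      ≤ polyWeight p a b i * ‖z‖ ^ (i.2 + (i.1 - 1) + (i.1 - 1) - 1) := by
  unfold polyTermDz polyTermDzbar polyWeight
  split_ifs
  · have := norm_pairMonomialDz_add_norm_pairMonomialDzbar_le (c₁ := a i.2 i.1)
      (c₂ := conj (b i.2 i.1)) (m := i.2 + (i.1 - 1)) (j := i.1 - 1) z
    rw [RCLike.norm_conj] at this
    linarith
  · simp

lemma norm_polyTermDz_add_norm_polyTermDzbar_le_polyWeight {z : ℂ} (hz : ‖z‖ ≤ 1)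
    (i : ℕ × ℕ) : ‖polyTermDz p a b i z‖ + ‖polyTermDzbar p a b i z‖ ≤ polyWeight p a b i :=
  (norm_polyTermDz_add_norm_polyTermDzbar_le z i).trans
    (mul_le_of_le_one_right (polyWeight_nonneg i) (pow_le_one₀ (norm_nonneg z) hz))

lemma polyWeight_mul_pow_le (ha : a 1 1 = 0) (hb : b 1 1 = 0) {z : ℂ} (hz : ‖z‖ ≤ 1)
    (i : ℕ × ℕ) :
    polyWeight p a b i * ‖z‖ ^ (i.2 + (i.1 - 1) + (i.1 - 1) - 1)
      ≤ polyWeight p a b i * ‖z‖ := by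
  obtain ⟨k, n⟩ := i
  unfold polyWeight
  split_ifs with hi
  · rcases eq_or_ne (k, n) (1, 1) with h11 | h11
    · simp only [Prod.mk.injEq] at h11
      simp [h11, ha, hb]
    · refine mul_le_mul_of_nonneg_left (pow_le_of_le_one (norm_nonneg z) hz ?_) (by positivity)
      simp only [ne_eq, Prod.mk.injEq, Finset.mem_Icc] at h11 hi
      omega
  · simp

lemma summable_polyTermDz (hU : Summable (polyWeight p a b)) {z : ℂ} (hz : ‖z‖ ≤ 1) :
    Summable (polyTermDz p a b · z) :=
  .of_norm_bounded hU fun i => (le_add_of_nonneg_right (norm_nonneg _)).trans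
    (norm_polyTermDz_add_norm_polyTermDzbar_le_polyWeight hz i)

lemma summable_polyTermDzbar (hU : Summable (polyWeight p a b)) {z : ℂ} (hz : ‖z‖ ≤ 1) :
    Summable (polyTermDzbar p a b · z) :=
  .of_norm_bounded hU fun i => (le_add_of_nonneg_left (norm_nonneg _)).trans
    (norm_polyTermDz_add_norm_polyTermDzbar_le_polyWeight hz i)

theorem hasFDerivAt_tsum_polyTerm (hU : Summable (polyWeight p a b)) {z : ℂ}
    (hz : z ∈ ball (0 : ℂ) 1) :
    HasFDerivAt (fun w => ∑' i, polyTerm p a b i w)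
      (wirtingerCLM (∑' i, polyTermDz p a b i z) (∑' i, polyTermDzbar p a b i z)) z := by
  have hz₁ : ‖z‖ ≤ 1 := (mem_ball_zero_iff.mp hz).le
  rw [← tsum_wirtingerCLM (summable_polyTermDz hU hz₁) (summable_polyTermDzbar hU hz₁)]
  refine hasFDerivAt_tsum_of_isPreconnected hU isOpen_ball (convex_ball 0 1).isPreconnected
    (fun i w _ => hasFDerivAt_polyTerm i w) (fun i w hw => ?_) hz
    (.of_norm_bounded hU (norm_polyTerm_le hz₁)) hz
  exact (norm_wirtingerCLM_le _ _).trans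
    (norm_polyTermDz_add_norm_polyTermDzbar_le_polyWeight (mem_ball_zero_iff.mp hw).le i)

theorem norm_tsum_polyTermDz_add_norm_tsum_polyTermDzbar_le (hU : Summable (polyWeight p a b))
    (ha : a 1 1 = 0) (hb : b 1 1 = 0) {z : ℂ} (hz : ‖z‖ ≤ 1) :
    ‖∑' i, polyTermDz p a b i z‖ + ‖∑' i, polyTermDzbar p a b i z‖
      ≤ ‖z‖ * ∑' i, polyWeight p a b i := by
  have hDz := (summable_polyTermDz hU hz).norm
  have hDzbar := (summable_polyTermDzbar hU hz).norm
  calc ‖∑' i, polyTermDz p a b i z‖ + ‖∑' i, polyTermDzbar p a b i z‖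
      ≤ ∑' i, ‖polyTermDz p a b i z‖ + ∑' i, ‖polyTermDzbar p a b i z‖ :=
        add_le_add (norm_tsum_le_tsum_norm hDz) (norm_tsum_le_tsum_norm hDzbar)
    _ = ∑' i, (‖polyTermDz p a b i z‖ + ‖polyTermDzbar p a b i z‖) :=
        (hDz.tsum_add hDzbar).symm
    _ ≤ ∑' i, polyWeight p a b i * ‖z‖ :=
        (hDz.add hDzbar).tsum_le_tsum (fun i =>
          (norm_polyTermDz_add_norm_polyTermDzbar_le z i).trans
            (polyWeight_mul_pow_le ha hb hz i)) (hU.mul_right _)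
    _ = ‖z‖ * ∑' i, polyWeight p a b i := by rw [tsum_mul_right, mul_comm]

lemma ofReal_norm_pow_two_mul (z : ℂ) (k : ℕ) :
    (‖z‖ : ℂ) ^ (2 * k) = z ^ k * conj z ^ k := by
  rw [pow_mul, ← mul_pow, mul_conj, normSq_eq_norm_sq, ofReal_pow]

theorem hasSum_polyTerm (hU : Summable (polyWeight p a b)) {z : ℂ} (hz : ‖z‖ ≤ 1) :
    HasSum (polyTerm p a b · z) (polyF p a b z) := by
  have hsum : Summable (polyTerm p a b · z) := .of_norm_bounded hU (norm_polyTerm_le hz)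
  have hrows : polyF p a b z = ∑ k ∈ Finset.Icc 1 p, ∑' n, polyTerm p a b (k, n) z := by
    refine Finset.sum_congr rfl fun k hk => ?_
    rw [← tsum_mul_left]
    refine tsum_congr fun n => ?_
    by_cases hn : 1 ≤ n
    · simp only [polyTerm, if_pos hn, if_pos (And.intro hk hn), pairMonomial,
        ofReal_norm_pow_two_mul, pow_add]
      ring
    · simp [polyTerm, hn]
  have hsupp : (polyTerm p a b · z)
      = fun i => if i.1 ∈ Finset.Icc 1 p then polyTerm p a b (i.1, i.2) z else 0 := by
    funext i
    split_ifs with hi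
    · rfl
    · simp [polyTerm, hi]
  rw [hrows, hsupp]
  exact hasSum_ite_mem_of_summable_rows fun k _ => hsum.prod_factor k

end Series

section LeadingTerm

def eraseOneOne (c : ℕ → ℕ → ℂ) : ℕ → ℕ → ℂ := fun n k => if n = 1 ∧ k = 1 then 0 else c n k

variable {p : ℕ} {a b : ℕ → ℕ → ℂ}

lemma polyWeight_eraseOneOne (i : ℕ × ℕ) :
    polyWeight p (eraseOneOne a) (eraseOneOne b) i
      = if i = (1, 1) then 0 else polyWeight p a b i := by
  obtain ⟨k, n⟩ := i
  by_cases h : n = 1 ∧ k = 1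
  · obtain ⟨rfl, rfl⟩ := h
    simp [polyWeight, eraseOneOne]
  · have hkn : (k, n) ≠ (1, 1) := by
      simp only [ne_eq, Prod.mk.injEq]
      tauto
    simp [polyWeight, eraseOneOne, h, hkn]

lemma polyTerm_eq_polyTerm_eraseOneOne_add (hp : 1 ≤ p) (ha : a 1 1 = 1) (i : ℕ × ℕ)
    (z : ℂ) :
    polyTerm p a b i z = polyTerm p (eraseOneOne a) (eraseOneOne b) i z
      + if i = (1, 1) then z + conj (b 1 1) * conj z else 0 := by
  obtain ⟨k, n⟩ := i
  by_cases h : n = 1 ∧ k = 1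
  · obtain ⟨rfl, rfl⟩ := h
    simp [polyTerm, pairMonomial, eraseOneOne, ha, hp]
  · have hkn : (k, n) ≠ (1, 1) := by
      simp only [ne_eq, Prod.mk.injEq]
      tauto
    simp [polyTerm, eraseOneOne, h, hkn]

lemma summable_polyWeight_eraseOneOne (hU : Summable (polyWeight p a b)) :
    Summable (polyWeight p (eraseOneOne a) (eraseOneOne b)) :=
  hU.of_nonneg_of_le polyWeight_nonneg fun i => by
    rw [polyWeight_eraseOneOne]
    split_ifs
    exacts [polyWeight_nonneg i, le_rfl]

lemma hasSum_polyWeight_eraseOneOne (hp : 1 ≤ p) (ha : a 1 1 = 1)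
    (hU : Summable (polyWeight p a b)) :
    HasSum (polyWeight p (eraseOneOne a) (eraseOneOne b))
      (∑' i, polyWeight p a b i - (1 + ‖b 1 1‖)) := by
  have hU11 : polyWeight p a b (1, 1) = 1 + ‖b 1 1‖ := by simp [polyWeight, ha, hp]
  rw [funext polyWeight_eraseOneOne, ← hU11]
  exact hasSum_ite_sub_hasSum hU.hasSum (1, 1)

theorem polyF_eq_add_tsum_polyTerm_eraseOneOne (hp : 1 ≤ p) (ha : a 1 1 = 1)
    (hU : Summable (polyWeight p a b)) {z : ℂ} (hz : ‖z‖ ≤ 1) :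
    polyF p a b z
      = z + conj (b 1 1) * conj z + ∑' i, polyTerm p (eraseOneOne a) (eraseOneOne b) i z := by
  have hrest := (hasSum_polyTerm (summable_polyWeight_eraseOneOne hU) hz).add
    (hasSum_ite_eq (1, 1) (z + conj (b 1 1) * conj z))
  simp only [← polyTerm_eq_polyTerm_eraseOneOne_add hp ha] at hrest
  rw [(hasSum_polyTerm hU hz).unique hrest,
    (hasSum_polyTerm (summable_polyWeight_eraseOneOne hU) hz).tsum_eq]
  ring

end LeadingTerm

/-- The two sums of the `HS_p(λ)` condition merged into one double series in `(k, n)`. -/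
def classWeight (lam : ℝ) (a b : ℕ → ℕ → ℂ) (k n : ℕ) : ℝ :=
  (if n = 1 then (2 * (k : ℝ) - 1) * (‖a 1 k‖ + ‖b 1 k‖) else 0) +
    if 2 ≤ n then (2 * ((k : ℝ) - 1) + n * (lam * n + 1 - lam)) * (‖a n k‖ + ‖b n k‖) else 0

namespace HSLam

variable {p : ℕ} {lam : ℝ} {a b : ℕ → ℕ → ℂ}

lemma norm_b_one_one_lt_one (hF : HSLam p lam a b) (hp : 1 ≤ p) : ‖b 1 1‖ < 1 := by
  have hnonneg : ∀ k ∈ Finset.Icc 1 p, 0 ≤ (2 * (k : ℝ) - 1) * (‖a 1 k‖ + ‖b 1 k‖) :=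
    fun k hk => by
      have : (1 : ℝ) ≤ k := by exact_mod_cast (Finset.mem_Icc.mp hk).1
      exact mul_nonneg (by linarith) (by positivity)
  have hle := Finset.single_le_sum hnonneg (Finset.mem_Icc.mpr ⟨le_rfl, hp⟩)
  have := hF.2.2.2.2.2
  simp only [Nat.cast_one, hF.1, norm_one] at hle
  linarith

lemma hasSum_classWeight (hF : HSLam p lam a b) :
    HasSum (fun i : ℕ × ℕ => if i.1 ∈ Finset.Icc 1 p then classWeight lam a b i.1 i.2 else 0)
      (∑ k ∈ Finset.Icc 1 p, ∑' n, classWeight lam a b k n) :=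
  hasSum_ite_mem_of_summable_rows fun k hk =>
    (hasSum_ite_eq 1 _).summable.add (hF.2.2.1 k hk)

lemma sum_tsum_classWeight_le_two (hF : HSLam p lam a b) :
    ∑ k ∈ Finset.Icc 1 p, ∑' n, classWeight lam a b k n ≤ 2 := by
  have hrow : ∀ k ∈ Finset.Icc 1 p, ∑' n, classWeight lam a b k n
      = (2 * (k : ℝ) - 1) * (‖a 1 k‖ + ‖b 1 k‖) + ∑' n : ℕ, (if 2 ≤ n then
        (2 * ((k : ℝ) - 1) + n * (lam * n + 1 - lam)) * (‖a n k‖ + ‖b n k‖) else 0) :=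
    fun k hk => by
      unfold classWeight
      rw [Summable.tsum_add (hasSum_ite_eq 1 _).summable (hF.2.2.1 k hk),
        tsum_ite_eq]
  rw [Finset.sum_congr rfl hrow, Finset.sum_add_distrib]
  linarith [hF.2.2.2.1]

lemma polyWeight_le_classWeight (hlam : 0 ≤ lam) (i : ℕ × ℕ) :
    polyWeight p a b i ≤ if i.1 ∈ Finset.Icc 1 p then classWeight lam a b i.1 i.2 else 0 := by
  obtain ⟨k, n⟩ := i
  by_cases hk : k ∈ Finset.Icc 1 p
  swap
  · simp [polyWeight, hk]
  have hdeg : ((n + (k - 1) + (k - 1) : ℕ) : ℝ) = n + 2 * ((k : ℝ) - 1) := by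
    push_cast [Nat.cast_sub (Finset.mem_Icc.mp hk).1]
    ring
  simp only [polyWeight, classWeight, hk, true_and, if_true, hdeg]
  rcases Nat.lt_or_ge n 2 with hn | hn
  · interval_cases n
    · simp
    · norm_num
      exact le_of_eq (by ring)
  · have hn₂ : (2 : ℝ) ≤ n := by exact_mod_cast hn
    rw [if_pos (by omega), if_neg (by omega), if_pos hn, zero_add]
    refine mul_le_mul_of_nonneg_right ?_ (by positivity)
    -- `n (λ n + 1 - λ) - n = λ n (n - 1) ≥ 0`
    nlinarith [mul_nonneg (mul_nonneg hlam (by linarith : (0 : ℝ) ≤ n))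
      (by linarith : (0 : ℝ) ≤ n - 1)]

lemma summable_polyWeight (hF : HSLam p lam a b) (hlam : 0 ≤ lam) :
    Summable (polyWeight p a b) :=
  hF.hasSum_classWeight.summable.of_nonneg_of_le polyWeight_nonneg
    (polyWeight_le_classWeight hlam)

lemma tsum_polyWeight_le_two (hF : HSLam p lam a b) (hlam : 0 ≤ lam) :
    ∑' i, polyWeight p a b i ≤ 2 :=
  (hasSum_le (polyWeight_le_classWeight hlam) (hF.summable_polyWeight hlam).hasSum
    hF.hasSum_classWeight).trans hF.sum_tsum_classWeight_le_two

lemma tsum_polyWeight_eraseOneOne_le (hF : HSLam p lam a b) (hp : 1 ≤ p) (hlam : 0 ≤ lam) :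
    ∑' i, polyWeight p (eraseOneOne a) (eraseOneOne b) i ≤ 1 - ‖b 1 1‖ := by
  rw [(hasSum_polyWeight_eraseOneOne hp hF.1 (hF.summable_polyWeight hlam)).tsum_eq]
  linarith [hF.tsum_polyWeight_le_two hlam]

theorem norm_tsum_polyTermDz_add_norm_tsum_polyTermDzbar_eraseOneOne_le (hF : HSLam p lam a b)
    (hp : 1 ≤ p) (hlam : 0 ≤ lam) {z : ℂ} (hz : ‖z‖ ≤ 1) :
    ‖∑' i, polyTermDz p (eraseOneOne a) (eraseOneOne b) i z‖
      + ‖∑' i, polyTermDzbar p (eraseOneOne a) (eraseOneOne b) i z‖ ≤ ‖z‖ * (1 - ‖b 1 1‖) :=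
  (norm_tsum_polyTermDz_add_norm_tsum_polyTermDzbar_le
    (summable_polyWeight_eraseOneOne (hF.summable_polyWeight hlam)) (by simp [eraseOneOne])
    (by simp [eraseOneOne]) hz).trans
    (mul_le_mul_of_nonneg_left (hF.tsum_polyWeight_eraseOneOne_le hp hlam) (norm_nonneg z))

end HSLam

end

/-- Mappings of the class `HS_p(λ)` are univalent and sense-preserving on the unit disk. -/
theorem univalent_and_sense_preserving
    (p : ℕ) (hp : 1 ≤ p) (lam : ℝ) (hlam : lam ∈ Set.Icc (0 : ℝ) 1)
    (a b : ℕ → ℕ → ℂ) (hF : HSLam p lam a b) :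
    Set.InjOn (polyF p a b) (Metric.ball (0 : ℂ) 1) ∧
    ∀ z ∈ Metric.ball (0 : ℂ) 1, ∃ f' : ℂ →L[ℝ] ℂ,
      HasFDerivAt (polyF p a b) f' z ∧ 0 < LinearMap.det (f' : ℂ →ₗ[ℝ] ℂ) := by
  have hU := hF.summable_polyWeight hlam.1
  have hβ₀ : ‖conj (b 1 1)‖ < 1 := by simpa using hF.norm_b_one_one_lt_one hp
  have hR := fun z (hz : z ∈ ball (0 : ℂ) 1) =>
    hasFDerivAt_tsum_polyTerm (summable_polyWeight_eraseOneOne hU) hz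
  have hαβ := fun z (hz : z ∈ ball (0 : ℂ) 1) =>
    (RCLike.norm_conj (b 1 1)).symm ▸
      hF.norm_tsum_polyTermDz_add_norm_tsum_polyTermDzbar_eraseOneOne_le hp hlam.1
        (mem_ball_zero_iff.mp hz).le
  have hf : EqOn (polyF p a b) (fun z => z + conj (b 1 1) * conj z
      + ∑' i, polyTerm p (eraseOneOne a) (eraseOneOne b) i z) (ball 0 1) := fun z hz =>
    polyF_eq_add_tsum_polyTerm_eraseOneOne hp hF.1 hU (mem_ball_zero_iff.mp hz).le
  exact ⟨injOn_ball_of_eqOn_add hβ₀ hR hαβ hf,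
    fun z hz => exists_hasFDerivAt_det_pos_of_eqOn_add hβ₀ hR hαβ hf hz⟩
end

section
/- Let k ≥ 1 and n ≥ 2 be integers, let λ ∈ [0,1] be real, and let r be a real number with 0 < r ≤ max{1/2, λ}. Then (2(k−1) + n²) · r^{2k+n−3} ≤ 2(k−1) + n(λn + 1 − λ). -/
/-!
Write `m = 2k + n - 3 ≥ n - 1 ≥ 1`. Since `r ≤ 1`, the term `2(k-1) r^m` is at most `2(k-1)`, and it
remains to bound `n² r^m` by `n(λn + 1 - λ) = λn² + (1 - λ)n`, which dominates both `λn²` and `n`.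
If `r ≤ λ` then `n² r^m ≤ n² r ≤ λn²`; if `r ≤ 1/2` then `n² r^m ≤ n² / 2^(n-1) ≤ n`,
because `n ≤ 2^(n-1)`.
-/

theorem natCast_sq_mul_pow_le_of_le_half {r : ℝ} (hr0 : 0 ≤ r) (hr : r ≤ 1 / 2) {n m : ℕ}
    (hm : n - 1 ≤ m) : (n : ℝ) ^ 2 * r ^ m ≤ n := by
  have hn : (n : ℝ) ≤ 2 ^ (n - 1) := by
    have := Nat.lt_two_pow_self (n := n - 1)
    exact_mod_cast (by omega : n ≤ 2 ^ (n - 1))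
  have hpow : r ^ m ≤ ((2 : ℝ) ^ (n - 1))⁻¹ := calc
    r ^ m ≤ (1 / 2) ^ m := pow_le_pow_left₀ hr0 hr m
    _ ≤ (1 / 2) ^ (n - 1) := pow_le_pow_of_le_one (by norm_num) (by norm_num) hm
    _ = ((2 : ℝ) ^ (n - 1))⁻¹ := by rw [one_div, inv_pow]
  calc (n : ℝ) ^ 2 * r ^ m ≤ n * 2 ^ (n - 1) * ((2 : ℝ) ^ (n - 1))⁻¹ := by
        rw [sq]; gcongr
    _ = n := by field_simp

/-- For integers `k ≥ 1`, `n ≥ 2`, `λ ∈ [0,1]` and `0 < r ≤ max {1/2, λ}`,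
one has `(2(k−1) + n²) r^{2k+n−3} ≤ 2(k−1) + n(λn + 1 − λ)`. -/
theorem coefficient_radius_inequality
    (k n : ℕ) (hk : 1 ≤ k) (hn : 2 ≤ n)
    (lam r : ℝ) (hlam : lam ∈ Set.Icc (0 : ℝ) 1)
    (hr0 : 0 < r) (hr : r ≤ max (1 / 2) lam) :
    (2 * ((k : ℝ) - 1) + (n : ℝ) ^ 2) * r ^ (2 * k + n - 3)
      ≤ 2 * ((k : ℝ) - 1) + (n : ℝ) * (lam * n + 1 - lam) := by
  obtain ⟨hlam0, hlam1⟩ := hlam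
  set m := 2 * k + n - 3
  have hk' : (0 : ℝ) ≤ 2 * ((k : ℝ) - 1) := by
    have : (1 : ℝ) ≤ k := by exact_mod_cast hk
    linarith
  have hn' : (1 : ℝ) ≤ n := by exact_mod_cast (by omega : 1 ≤ n)
  have hr1 : r ≤ 1 := hr.trans (max_le (by norm_num) hlam1)
  have hsq : (n : ℝ) ^ 2 * r ^ m ≤ n * (lam * n + 1 - lam) := by
    rcases le_max_iff.mp hr with hhalf | hrlam
    · calc (n : ℝ) ^ 2 * r ^ m ≤ n := natCast_sq_mul_pow_le_of_le_half hr0.le hhalf (by omega)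
        _ ≤ n * (lam * n + 1 - lam) := by
            nlinarith [mul_nonneg hlam0 (mul_nonneg (by linarith : (0 : ℝ) ≤ n) (sub_nonneg.2 hn'))]
    · calc (n : ℝ) ^ 2 * r ^ m ≤ n ^ 2 * lam := by
            gcongr; exact (pow_le_of_le_one hr0.le hr1 (by omega)).trans hrlam
        _ ≤ n * (lam * n + 1 - lam) := by nlinarith
  have hk_term : 2 * ((k : ℝ) - 1) * r ^ m ≤ 2 * ((k : ℝ) - 1) :=
    mul_le_of_le_one_right hk' (pow_le_one₀ hr0.le hr1)
  linarith [add_mul (2 * ((k : ℝ) - 1)) ((n : ℝ) ^ 2) (r ^ m)]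
end

section
/- Let p ≥ 1 be an integer, λ ∈ [0,1/2], and let F be a polyharmonic mapping of class HS_p(λ) on the unit disk 𝔻. Then for every z ∈ 𝔻, (1 − |b_{1,1}|)|z| − ((1 − |b_{1,1}|)/(2(1+λ)))|z|² ≤ |F(z)| ≤ (1 + |b_{1,1}|)|z| + ((1 − |b_{1,1}|)/(2(1+λ)))|z|². -/
open Complex Metric Set

open ComplexConjugate

/-! The leading part of `F` is `z + conj b₁₁ · conj z`, whose modulus lies between
`(1 - |b₁₁|)|z|` and `(1 + |b₁₁|)|z|`. Every other term `|z|^{2(k-1)} (a_{n,k} zⁿ + …)` has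
degree `2(k-1) + n ≥ 2`, so for `|z| < 1` the rest of `F` is at most `|z|²` times the coefficient
mass `M` outside `(n,k) = (1,1)`. For `λ ≤ 1/2` each weight `2(k-1) + n(λn + 1 - λ)` with
`(n,k) ≠ (1,1)` is at least `2(1+λ)`, while the weight of `(1,1)` is `1` and
`|a₁₁| + |b₁₁| = 1 + |b₁₁|`; so the coefficient condition gives `2(1+λ) M ≤ 1 - |b₁₁|`. -/

lemma summable_ite_two_le {f : ℕ → ℝ} (hf : Summable f) (hf0 : ∀ n, 0 ≤ f n) :
    Summable fun n => if 2 ≤ n then f n else 0 :=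
  hf.of_nonneg_of_le (fun n => by split_ifs <;> simp [hf0]) fun n => by
    split_ifs <;> simp [hf0]

noncomputable def harmonicTerm (a b : ℕ → ℂ) (z : ℂ) (n : ℕ) : ℂ :=
  if 1 ≤ n then a n * z ^ n + conj (b n) * conj z ^ n else 0

section HarmonicSeries

variable {a b : ℕ → ℂ} {z : ℂ}

@[simp]
lemma harmonicTerm_one (a b : ℕ → ℂ) (z : ℂ) :
    harmonicTerm a b z 1 = a 1 * z + conj (b 1) * conj z := by
  simp [harmonicTerm]

lemma norm_harmonicTerm_le (a b : ℕ → ℂ) (z : ℂ) (n : ℕ) :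
    ‖harmonicTerm a b z n‖ ≤ (‖a n‖ + ‖b n‖) * ‖z‖ ^ n := by
  unfold harmonicTerm
  split_ifs
  · calc ‖a n * z ^ n + conj (b n) * conj z ^ n‖
        ≤ ‖a n * z ^ n‖ + ‖conj (b n) * conj z ^ n‖ := norm_add_le _ _
      _ = (‖a n‖ + ‖b n‖) * ‖z‖ ^ n := by
        simp only [norm_mul, norm_pow, Complex.norm_conj]; ring
  · rw [norm_zero]; positivity

lemma summable_harmonicTerm (hs : Summable fun n => ‖a n‖ + ‖b n‖) (hz : ‖z‖ ≤ 1) :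
    Summable (harmonicTerm a b z) :=
  hs.of_norm_bounded fun n => (norm_harmonicTerm_le a b z n).trans <|
    mul_le_of_le_one_right (by positivity) (pow_le_one₀ (norm_nonneg z) hz)

lemma norm_tsum_harmonicTerm_sub_le (hs : Summable fun n => ‖a n‖ + ‖b n‖) (hz : ‖z‖ ≤ 1) :
    ‖∑' n, harmonicTerm a b z n - harmonicTerm a b z 1‖ ≤
      ‖z‖ ^ 2 * ∑' n, if 2 ≤ n then ‖a n‖ + ‖b n‖ else 0 := by
  rw [(summable_harmonicTerm hs hz).tsum_eq_add_tsum_ite 1, add_sub_cancel_left,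
    ← tsum_mul_left]
  refine tsum_of_norm_bounded ((summable_ite_two_le hs fun n => by positivity).mul_left _).hasSum
    fun n => ?_
  rcases Nat.lt_or_ge n 2 with hn | hn
  · interval_cases n <;> simp [harmonicTerm]
  · rw [if_neg (by omega), if_pos hn, mul_comm]
    exact (norm_harmonicTerm_le a b z n).trans <| mul_le_mul_of_nonneg_left
      (pow_le_pow_of_le_one (norm_nonneg z) hz hn) (by positivity)

lemma norm_tsum_harmonicTerm_le (hs : Summable fun n => ‖a n‖ + ‖b n‖) (hz : ‖z‖ ≤ 1) :
    ‖∑' n, harmonicTerm a b z n‖ ≤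
      ‖a 1‖ + ‖b 1‖ + ∑' n, if 2 ≤ n then ‖a n‖ + ‖b n‖ else 0 := by
  have htail := norm_tsum_harmonicTerm_sub_le hs hz
  have hlead := norm_harmonicTerm_le a b z 1
  have hS := norm_le_norm_add_norm_sub' (∑' n, harmonicTerm a b z n) (harmonicTerm a b z 1)
  have htail_nonneg : 0 ≤ ∑' n, if 2 ≤ n then ‖a n‖ + ‖b n‖ else 0 :=
    tsum_nonneg fun n => by positivity
  have hz2 : ‖z‖ ^ 2 ≤ 1 := pow_le_one₀ (norm_nonneg z) hz
  rw [pow_one] at hlead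
  nlinarith [norm_nonneg (a 1), norm_nonneg (b 1)]

end HarmonicSeries

lemma polyF_eq_sum_tsum_harmonicTerm (p : ℕ) (a b : ℕ → ℕ → ℂ) (z : ℂ) :
    polyF p a b z = ∑ k ∈ Finset.Icc 1 p,
      (‖z‖ : ℂ) ^ (2 * (k - 1)) * ∑' n, harmonicTerm (a · k) (b · k) z n := rfl

/-- `∑ₙ (|a_{n,k}| + |b_{n,k}|)` with the term `(n,k) = (1,1)` left out. -/
noncomputable def nonleadingMass (a b : ℕ → ℕ → ℂ) (k : ℕ) : ℝ :=
  (∑' n, if 2 ≤ n then ‖a n k‖ + ‖b n k‖ else 0) + if 2 ≤ k then ‖a 1 k‖ + ‖b 1 k‖ else 0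

section Remainder

variable {p : ℕ} {a b : ℕ → ℕ → ℂ} {z : ℂ}

lemma norm_block_sub_leading_le {k : ℕ} (hk : 1 ≤ k) (hs : Summable fun n => ‖a n k‖ + ‖b n k‖)
    (hz : ‖z‖ ≤ 1) :
    ‖(‖z‖ : ℂ) ^ (2 * (k - 1)) * ∑' n, harmonicTerm (a · k) (b · k) z n -
        if k = 1 then harmonicTerm (a · 1) (b · 1) z 1 else 0‖ ≤
      ‖z‖ ^ 2 * nonleadingMass a b k := by
  obtain rfl | hk2 := hk.eq_or_lt
  · simpa [nonleadingMass] using norm_tsum_harmonicTerm_sub_le hs hz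
  · have hpow : ‖z‖ ^ (2 * (k - 1)) ≤ ‖z‖ ^ 2 :=
      pow_le_pow_of_le_one (norm_nonneg z) hz (by omega)
    rw [if_neg hk2.ne', sub_zero, norm_mul, norm_pow, Complex.norm_real, Real.norm_eq_abs,
      abs_norm, nonleadingMass, if_pos (show 2 ≤ k from hk2), add_comm (∑' n, _)]
    exact mul_le_mul hpow (norm_tsum_harmonicTerm_le hs hz) (norm_nonneg _) (by positivity)

lemma norm_polyF_sub_leading_le (hp : 1 ≤ p)
    (hs : ∀ k ∈ Finset.Icc 1 p, Summable fun n => ‖a n k‖ + ‖b n k‖) (hz : ‖z‖ ≤ 1) :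
    ‖polyF p a b z - harmonicTerm (a · 1) (b · 1) z 1‖ ≤
      ‖z‖ ^ 2 * ∑ k ∈ Finset.Icc 1 p, nonleadingMass a b k := by
  have hlead : harmonicTerm (a · 1) (b · 1) z 1 = ∑ k ∈ Finset.Icc 1 p,
      if k = 1 then harmonicTerm (a · 1) (b · 1) z 1 else 0 := by
    rw [Finset.sum_ite_eq' _ 1, if_pos (Finset.mem_Icc.mpr ⟨le_rfl, hp⟩)]
  rw [polyF_eq_sum_tsum_harmonicTerm, hlead, ← Finset.sum_sub_distrib, Finset.mul_sum]
  exact (norm_sum_le _ _).trans <| Finset.sum_le_sum fun k hk =>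
    norm_block_sub_leading_le (Finset.mem_Icc.mp hk).1 (hs k hk) hz

end Remainder

lemma sum_Icc_one_eq_add_sum_ite_two_le {M : Type*} [AddCommMonoid M] {p : ℕ} (hp : 1 ≤ p)
    (f : ℕ → M) :
    ∑ k ∈ Finset.Icc 1 p, f k = f 1 + ∑ k ∈ Finset.Icc 1 p, if 2 ≤ k then f k else 0 := by
  rw [← Finset.sum_filter, ← Finset.add_sum_erase _ _ (Finset.mem_Icc.mpr ⟨le_rfl, hp⟩)]
  congr 2
  ext k
  simp only [Finset.mem_erase, Finset.mem_filter, Finset.mem_Icc]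
  omega

lemma two_mul_one_add_le_weight {lam k n : ℝ} (hlam : 0 ≤ lam) (hk : 1 ≤ k) (hn : 2 ≤ n) :
    2 * (1 + lam) ≤ 2 * (k - 1) + n * (lam * n + 1 - lam) := by
  nlinarith [mul_nonneg (mul_nonneg hlam (sub_nonneg.2 hn)) (by linarith : (0 : ℝ) ≤ n + 1)]

lemma two_mul_one_add_mul_tsum_tail_le_weighted {lam : ℝ} {a b : ℕ → ℕ → ℂ} {k : ℕ}
    (hlam : 0 ≤ lam) (hk : 1 ≤ k) (hs : Summable fun n => ‖a n k‖ + ‖b n k‖)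
    (hsw : Summable fun n : ℕ => if 2 ≤ n then (2 * ((k : ℝ) - 1) + n * (lam * n + 1 - lam)) *
      (‖a n k‖ + ‖b n k‖) else 0) :
    2 * (1 + lam) * (∑' n, if 2 ≤ n then ‖a n k‖ + ‖b n k‖ else 0) ≤
      ∑' n : ℕ, if 2 ≤ n then (2 * ((k : ℝ) - 1) + n * (lam * n + 1 - lam)) *
        (‖a n k‖ + ‖b n k‖) else 0 := by
  rw [← tsum_mul_left]
  refine ((summable_ite_two_le hs fun n => by positivity).mul_left _).tsum_le_tsum
    (fun n => ?_) hsw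
  split_ifs with hn
  · exact mul_le_mul_of_nonneg_right (two_mul_one_add_le_weight hlam (by exact_mod_cast hk)
      (by exact_mod_cast hn)) (by positivity)
  · rw [mul_zero]

lemma two_mul_one_add_mul_sum_nonleadingMass_le {p : ℕ} {lam : ℝ} {a b : ℕ → ℕ → ℂ}
    (hp : 1 ≤ p) (hlam : lam ∈ Set.Icc (0 : ℝ) (1 / 2)) (hF : HSLam p lam a b) :
    2 * (1 + lam) * ∑ k ∈ Finset.Icc 1 p, nonleadingMass a b k ≤ 1 - ‖b 1 1‖ := by
  obtain ⟨ha11, hs, hsw, hineq, -, -⟩ := hF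
  have hfirst : ∑ k ∈ Finset.Icc 1 p, (2 * (k : ℝ) - 1) * (‖a 1 k‖ + ‖b 1 k‖) =
      1 + ‖b 1 1‖ + ∑ k ∈ Finset.Icc 1 p,
        if 2 ≤ k then (2 * (k : ℝ) - 1) * (‖a 1 k‖ + ‖b 1 k‖) else 0 := by
    rw [sum_Icc_one_eq_add_sum_ite_two_le hp, ha11]
    norm_num
  have hblock : ∀ k ∈ Finset.Icc 1 p, 2 * (1 + lam) * nonleadingMass a b k ≤
      (∑' n : ℕ, if 2 ≤ n then (2 * ((k : ℝ) - 1) + n * (lam * n + 1 - lam)) *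
        (‖a n k‖ + ‖b n k‖) else 0) +
      if 2 ≤ k then (2 * (k : ℝ) - 1) * (‖a 1 k‖ + ‖b 1 k‖) else 0 := by
    intro k hk
    rw [nonleadingMass, mul_add]
    refine add_le_add (two_mul_one_add_mul_tsum_tail_le_weighted hlam.1
      (Finset.mem_Icc.mp hk).1 (hs k hk) (hsw k hk)) ?_
    split_ifs with hk2
    · have : (2 : ℝ) ≤ k := by exact_mod_cast hk2
      exact mul_le_mul_of_nonneg_right (by linarith [hlam.2]) (by positivity)
    · rw [mul_zero]
  rw [Finset.mul_sum]
  refine (Finset.sum_le_sum hblock).trans ?_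
  rw [Finset.sum_add_distrib]
  linarith

/-- Distortion bounds for mappings in `HS_p(λ)`, `0 ≤ λ ≤ 1/2`. -/
theorem distortion_bounds_small_lambda
    (p : ℕ) (hp : 1 ≤ p) (lam : ℝ) (hlam : lam ∈ Set.Icc (0 : ℝ) (1 / 2))
    (a b : ℕ → ℕ → ℂ) (hF : HSLam p lam a b) :
    ∀ z ∈ Metric.ball (0 : ℂ) 1,
      (1 - ‖b 1 1‖) * ‖z‖ -
          (1 - ‖b 1 1‖) / (2 * (1 + lam)) * ‖z‖ ^ 2
        ≤ ‖polyF p a b z‖ ∧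
      ‖polyF p a b z‖
        ≤ (1 + ‖b 1 1‖) * ‖z‖ +
          (1 - ‖b 1 1‖) / (2 * (1 + lam)) * ‖z‖ ^ 2 := by
  intro z hz
  have hz1 : ‖z‖ ≤ 1 := (mem_ball_zero_iff.mp hz).le
  set K := (1 - ‖b 1 1‖) / (2 * (1 + lam))
  have hmass : ∑ k ∈ Finset.Icc 1 p, nonleadingMass a b k ≤ K := by
    rw [le_div_iff₀ (by linarith [hlam.1]), mul_comm]
    exact two_mul_one_add_mul_sum_nonleadingMass_le hp hlam hF
  obtain ⟨ha11, hs, -⟩ := hF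
  have hrem : ‖polyF p a b z - harmonicTerm (a · 1) (b · 1) z 1‖ ≤ K * ‖z‖ ^ 2 :=
    (norm_polyF_sub_leading_le hp hs hz1).trans (by rw [mul_comm]; gcongr)
  have hdev : ‖polyF p a b z - z‖ ≤ ‖b 1 1‖ * ‖z‖ + K * ‖z‖ ^ 2 :=
    calc ‖polyF p a b z - z‖
        = ‖conj (b 1 1) * conj z + (polyF p a b z - harmonicTerm (a · 1) (b · 1) z 1)‖ := by
          rw [harmonicTerm_one, ha11]; ring_nf
      _ ≤ ‖b 1 1‖ * ‖z‖ + K * ‖z‖ ^ 2 :=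
          (norm_add_le _ _).trans (add_le_add (by simp) hrem)
  have := abs_le.mp ((abs_norm_sub_norm_le (polyF p a b z) z).trans hdev)
  constructor <;> linarith
end

section
/- Let p ≥ 1 be an integer, λ ∈ [0,1], and let F be a polyharmonic mapping of class HS_p(λ) on the unit disk 𝔻, with harmonic components G_k(z) = Σ_{n=1}^∞ (a_{n,k} z^n + conj(b_{n,k}) conj(z)^n) for 1 ≤ k ≤ p. Then for each k ∈ {1,…,p} and every z ∈ 𝔻, |G_k(z)| ≤ (|a_{1,k}| + |b_{1,k}|)|z| + ((1 − |b_{1,1}|)/(2(1+λ)))|z|². -/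
open Complex Metric Set

/-! Each term of `G_k` has modulus at most `(|a_{n,k}| + |b_{n,k}|) r^n ≤
(|a_{n,k}| + |b_{n,k}|) r^2` for `n ≥ 2`, so `|G_k(z)| ≤ (|a_{1,k}| + |b_{1,k}|) r + r^2 T_k`
with `T_k = Σ_{n ≥ 2} (|a_{n,k}| + |b_{n,k}|)`. Every weight `2(k-1) + n(λn + 1 - λ)` with
`n ≥ 2` is at least `2(1 + λ)`, so the defining inequality of `HS_p(λ)` gives
`2(1 + λ) T_k ≤ 2 - Σ_k (2k-1)(|a_{1,k}| + |b_{1,k}|) ≤ 1 - |b_{1,1}|`, the last step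
because the `k = 1` term of that sum is `1 + |b_{1,1}|`. -/

theorem norm_mul_pow_add_conj_mul_conj_pow_le (a b z : ℂ) (n : ℕ) :
    ‖a * z ^ n + starRingEnd ℂ b * starRingEnd ℂ z ^ n‖ ≤ (‖a‖ + ‖b‖) * ‖z‖ ^ n :=
  calc ‖a * z ^ n + starRingEnd ℂ b * starRingEnd ℂ z ^ n‖
      ≤ ‖a * z ^ n‖ + ‖starRingEnd ℂ b * starRingEnd ℂ z ^ n‖ := norm_add_le _ _
    _ = (‖a‖ + ‖b‖) * ‖z‖ ^ n := by simp only [norm_mul, norm_pow, Complex.norm_conj]; ring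

theorem norm_tsum_le_mul_add_sq_mul_tsum_tail {E : Type*} [SeminormedAddCommGroup E]
    {f : ℕ → E} {c : ℕ → ℝ} {r : ℝ} (hc : Summable c) (hc0 : ∀ n, 0 ≤ c n)
    (hr0 : 0 ≤ r) (hr1 : r ≤ 1) (hf0 : f 0 = 0) (hf : ∀ n, ‖f n‖ ≤ c n * r ^ n) :
    ‖∑' n, f n‖ ≤ c 1 * r + r ^ 2 * ∑' n, c (n + 2) := by
  have hfc : ∀ n, ‖f n‖ ≤ c n := fun n =>
    (hf n).trans (mul_le_of_le_one_right (hc0 n) (pow_le_one₀ hr0 hr1))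
  have hnorm : Summable fun n => ‖f n‖ := hc.of_nonneg_of_le (fun _ => norm_nonneg _) hfc
  have htail : ∀ n, ‖f (n + 2)‖ ≤ r ^ 2 * c (n + 2) := fun n =>
    calc ‖f (n + 2)‖ ≤ c (n + 2) * r ^ (n + 2) := hf (n + 2)
      _ = r ^ 2 * (c (n + 2) * r ^ n) := by ring
      _ ≤ r ^ 2 * c (n + 2) := by
        gcongr; exact mul_le_of_le_one_right (hc0 _) (pow_le_one₀ hr0 hr1)
  calc ‖∑' n, f n‖ ≤ ∑' n, ‖f n‖ := norm_tsum_le_tsum_norm hnorm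
    _ = ‖f 0‖ + ‖f 1‖ + ∑' n, ‖f (n + 2)‖ := by
      rw [← hnorm.sum_add_tsum_nat_add 2, Finset.sum_range_succ, Finset.sum_range_one]
    _ ≤ 0 + c 1 * r + ∑' n, r ^ 2 * c (n + 2) := by
      gcongr ?_ + ?_ + ?_
      · rw [hf0, norm_zero]
      · simpa using hf 1
      · exact ((summable_nat_add_iff 2).2 hnorm).tsum_le_tsum htail
          (((summable_nat_add_iff 2).2 hc).mul_left _)
    _ = c 1 * r + r ^ 2 * ∑' n, c (n + 2) := by rw [tsum_mul_left, zero_add]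

def hsWeight (lam : ℝ) (k n : ℕ) : ℝ :=
  2 * ((k : ℝ) - 1) + n * (lam * n + 1 - lam)

theorem two_mul_one_add_le_hsWeight {lam : ℝ} (hlam : 0 ≤ lam) {k n : ℕ} (hk : 1 ≤ k)
    (hn : 2 ≤ n) : 2 * (1 + lam) ≤ hsWeight lam k n := by
  have hk' : (1 : ℝ) ≤ k := by exact_mod_cast hk
  have hn' : (2 : ℝ) ≤ n := by exact_mod_cast hn
  have : 0 ≤ ((n : ℝ) - 2) * (lam * (n + 1) + 1) := by
    apply mul_nonneg <;> nlinarith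
  unfold hsWeight
  nlinarith

theorem hsWeight_nonneg {lam : ℝ} (hlam : 0 ≤ lam) {k n : ℕ} (hk : 1 ≤ k) (hn : 2 ≤ n) :
    0 ≤ hsWeight lam k n :=
  le_trans (by positivity) (two_mul_one_add_le_hsWeight hlam hk hn)

namespace HSLam

variable {p : ℕ} {lam : ℝ} {a b : ℕ → ℕ → ℂ}

theorem one_add_norm_b_le (hF : HSLam p lam a b) (hp : 1 ≤ p) :
    1 + ‖b 1 1‖ ≤ ∑ k ∈ Finset.Icc 1 p, (2 * (k : ℝ) - 1) * (‖a 1 k‖ + ‖b 1 k‖) := by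
  have hterm : ∀ k ∈ Finset.Icc 1 p, 0 ≤ (2 * (k : ℝ) - 1) * (‖a 1 k‖ + ‖b 1 k‖) := by
    intro k hk
    have : (1 : ℝ) ≤ k := by exact_mod_cast (Finset.mem_Icc.mp hk).1
    exact mul_nonneg (by linarith) (by positivity)
  calc 1 + ‖b 1 1‖ = (2 * ((1 : ℕ) : ℝ) - 1) * (‖a 1 1‖ + ‖b 1 1‖) := by
        rw [hF.1, norm_one]; push_cast; ring
    _ ≤ _ := Finset.single_le_sum hterm (Finset.mem_Icc.mpr ⟨le_rfl, hp⟩)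

theorem tsum_weighted_le (hF : HSLam p lam a b) (hp : 1 ≤ p) (hlam : 0 ≤ lam) {k : ℕ}
    (hk : k ∈ Finset.Icc 1 p) :
    ∑' n, (if 2 ≤ n then hsWeight lam k n * (‖a n k‖ + ‖b n k‖) else 0) ≤ 1 - ‖b 1 1‖ := by
  have hnonneg : ∀ j ∈ Finset.Icc 1 p,
      0 ≤ ∑' n, (if 2 ≤ n then hsWeight lam j n * (‖a n j‖ + ‖b n j‖) else 0) := by
    intro j hj
    refine tsum_nonneg fun n => ?_
    split_ifs with hn
    · exact mul_nonneg (hsWeight_nonneg hlam (Finset.mem_Icc.mp hj).1 hn) (by positivity)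
    · exact le_rfl
  calc _ ≤ ∑ j ∈ Finset.Icc 1 p,
        ∑' n, (if 2 ≤ n then hsWeight lam j n * (‖a n j‖ + ‖b n j‖) else 0) :=
        Finset.single_le_sum hnonneg hk
    _ ≤ 2 - ∑ j ∈ Finset.Icc 1 p, (2 * (j : ℝ) - 1) * (‖a 1 j‖ + ‖b 1 j‖) := hF.2.2.2.1
    _ ≤ 1 - ‖b 1 1‖ := by linarith [hF.one_add_norm_b_le hp]

theorem tsum_coeff_tail_le (hF : HSLam p lam a b) (hp : 1 ≤ p) (hlam : 0 ≤ lam) {k : ℕ}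
    (hk : k ∈ Finset.Icc 1 p) :
    ∑' n, (‖a (n + 2) k‖ + ‖b (n + 2) k‖) ≤ (1 - ‖b 1 1‖) / (2 * (1 + lam)) := by
  set w : ℕ → ℝ := fun n => if 2 ≤ n then hsWeight lam k n * (‖a n k‖ + ‖b n k‖) else 0
  have hw : Summable w := hF.2.2.1 k hk
  have hshift : ∑' n, w n = ∑' n, w (n + 2) := by
    rw [← hw.sum_add_tsum_nat_add 2]
    simp [w, Finset.sum_range_succ]
  have hcoeff : ∀ n, 2 * (1 + lam) * (‖a (n + 2) k‖ + ‖b (n + 2) k‖) ≤ w (n + 2) := by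
    intro n
    simp only [w, if_pos (Nat.le_add_left 2 n)]
    gcongr
    exact two_mul_one_add_le_hsWeight hlam (Finset.mem_Icc.mp hk).1 (Nat.le_add_left 2 n)
  rw [le_div_iff₀' (by linarith)]
  calc 2 * (1 + lam) * ∑' n, (‖a (n + 2) k‖ + ‖b (n + 2) k‖)
      = ∑' n, 2 * (1 + lam) * (‖a (n + 2) k‖ + ‖b (n + 2) k‖) := tsum_mul_left.symm
    _ ≤ ∑' n, w (n + 2) :=
      ((((summable_nat_add_iff 2).2 (hF.2.1 k hk))).mul_left _).tsum_le_tsum hcoeff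
        ((summable_nat_add_iff 2).2 hw)
    _ = ∑' n, w n := hshift.symm
    _ ≤ 1 - ‖b 1 1‖ := hF.tsum_weighted_le hp hlam hk

end HSLam

/-- Bound on the harmonic components `G_k` of a mapping `F ∈ HS_p(λ)`. -/
theorem harmonic_component_bound
    (p : ℕ) (hp : 1 ≤ p) (lam : ℝ) (hlam : lam ∈ Set.Icc (0 : ℝ) 1)
    (a b : ℕ → ℕ → ℂ) (hF : HSLam p lam a b) :
    ∀ k ∈ Finset.Icc 1 p, ∀ z ∈ Metric.ball (0 : ℂ) 1,
      ‖∑' n : ℕ, if 1 ≤ n then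
          a n k * z ^ n + (starRingEnd ℂ) (b n k) * ((starRingEnd ℂ) z) ^ n else 0‖
        ≤ (‖a 1 k‖ + ‖b 1 k‖) * ‖z‖ +
          (1 - ‖b 1 1‖) / (2 * (1 + lam)) * ‖z‖ ^ 2 := by
  intro k hk z hz
  have hz1 : ‖z‖ ≤ 1 := (mem_ball_zero_iff.mp hz).le
  have hterm : ∀ n, ‖(if 1 ≤ n then a n k * z ^ n + (starRingEnd ℂ) (b n k) *
      ((starRingEnd ℂ) z) ^ n else 0)‖ ≤ (‖a n k‖ + ‖b n k‖) * ‖z‖ ^ n := by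
    intro n
    split_ifs
    · exact norm_mul_pow_add_conj_mul_conj_pow_le _ _ _ _
    · rw [norm_zero]; positivity
  calc _ ≤ (‖a 1 k‖ + ‖b 1 k‖) * ‖z‖ + ‖z‖ ^ 2 * ∑' n, (‖a (n + 2) k‖ + ‖b (n + 2) k‖) :=
        norm_tsum_le_mul_add_sq_mul_tsum_tail (hF.2.1 k hk) (fun _ => by positivity)
          (norm_nonneg z) hz1 (by simp) hterm
    _ ≤ (‖a 1 k‖ + ‖b 1 k‖) * ‖z‖ + ‖z‖ ^ 2 * ((1 - ‖b 1 1‖) / (2 * (1 + lam))) := by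
        gcongr; exact hF.tsum_coeff_tail_le hp hlam.1 hk
    _ = _ := by ring
end

section
/- Let λ ∈ [1/2, 1]. Let F(z) = z + Σ_{n=2}^∞ (a_n z^n + conj(b_n) conj(z)^n) be a harmonic mapping of class HS_1^0(λ), i.e., Σ_{n=2}^∞ n(λn + 1 − λ)(|a_n| + |b_n|) ≤ 1 with absolutely summable coefficients. Let H(z) = z + Σ_{n=2}^∞ (A_n z^n + conj(B_n) conj(z)^n) be a harmonic mapping whose coefficients satisfy 2|A_n| ≤ n + 1 and 2|B_n| ≤ n − 1 for all n ≥ 2 (these bounds hold for every mapping in the class C_H^0 of normalized harmonic univalent convex mappings). Then the integral convolution (F⋄H)(z) = z + Σ_{n=2}^∞ ((a_n A_n / n) z^n + conj(b_n B_n / n) conj(z)^n) satisfies Σ_{n=2}^∞ n²(|a_n A_n| + |b_n B_n|)/n ≤ 1, i.e., F⋄H belongs to the class HC^0; consequently F⋄H is univalent on 𝔻 and its image (F⋄H)(𝔻) is a convex subset of ℂ. -/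
open Complex Metric Set

/-- The harmonic mapping `z + Σ_{n=2}^∞ (a_n z^n + conj(b_n) conj(z)^n)`. -/
noncomputable def harmMap (a b : ℕ → ℂ) (z : ℂ) : ℂ :=
  z + ∑' n : ℕ, if 2 ≤ n then
    a n * z ^ n + (starRingEnd ℂ) (b n) * ((starRingEnd ℂ) z) ^ n else 0

/-!
The coefficients `P`, `Q` of `F⋄H` satisfy `∑ n² ‖P n‖ + (n² + 2n) ‖Q n‖ ≤ 1`, which is stronger
than the `HC⁰` inequality. Under this condition `f = z + h + conj g` moves `x - y` by at most
`‖x - y‖ / 2` on the closed disk, so it is injective and open. On the circle, the tangent `w` of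
`θ ↦ f (exp (θ i))` and its derivative `i u` satisfy `‖u - w‖ ≤ ‖w‖`, so the tangent angle increases
monotonically by `2π` and the boundary curve lies on one side of each of its tangent lines. The
maximum principle for the harmonic functions `Re ((f - f (exp (θ i))) * conj (w θ))` puts `f 𝔻` in
the intersection of the open half-planes so obtained; `f 𝔻` is open and relatively closed in this
convex, hence connected, set, so it is all of it.
-/

open ComplexConjugate
open scoped Real

noncomputable section

namespace HarmonicConvex

theorem norm_pow_sub_pow_le {R : Type*} [NormedRing R] [NormOneClass R] {x y : R}
    (hx : ‖x‖ ≤ 1) (hy : ‖y‖ ≤ 1) (n : ℕ) : ‖x ^ n - y ^ n‖ ≤ n * ‖x - y‖ := by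
  induction n with
  | zero => simp
  | succ k ih =>
    have hyk : ‖y ^ k‖ ≤ 1 := (norm_pow_le y k).trans (pow_le_one₀ (norm_nonneg y) hy)
    calc ‖x ^ (k + 1) - y ^ (k + 1)‖ = ‖x * (x ^ k - y ^ k) + (x - y) * y ^ k‖ := by
          rw [pow_succ', pow_succ']; noncomm_ring
      _ ≤ ‖x‖ * ‖x ^ k - y ^ k‖ + ‖x - y‖ * ‖y ^ k‖ :=
          (norm_add_le _ _).trans (add_le_add (norm_mul_le _ _) (norm_mul_le _ _))
      _ ≤ 1 * (k * ‖x - y‖) + ‖x - y‖ * 1 := by gcongr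
      _ = (k + 1 : ℕ) * ‖x - y‖ := by push_cast; ring

section PowerSeries

variable {c : ℕ → ℂ}

theorem norm_mul_pow_le {z : ℂ} (hz : ‖z‖ ≤ 1) (n : ℕ) : ‖c n * z ^ n‖ ≤ ‖c n‖ := by
  rw [norm_mul, norm_pow]
  exact mul_le_of_le_one_right (norm_nonneg _) (pow_le_one₀ (norm_nonneg z) hz)

theorem summable_mul_pow (hc : Summable fun n => ‖c n‖) {z : ℂ} (hz : ‖z‖ ≤ 1) :
    Summable fun n => c n * z ^ n :=
  .of_norm_bounded hc (norm_mul_pow_le hz)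

theorem continuousOn_tsum_mul_pow (hc : Summable fun n => ‖c n‖) :
    ContinuousOn (fun z => ∑' n, c n * z ^ n) (closedBall 0 1) :=
  continuousOn_tsum (fun n => (continuous_const.mul (continuous_pow n)).continuousOn) hc
    fun n _ hz => norm_mul_pow_le (mem_closedBall_zero_iff.1 hz) n

theorem hasDerivAt_tsum_mul_pow (hc : Summable fun n => n * ‖c n‖) {z : ℂ} (hz : z ∈ ball 0 1) :
    HasDerivAt (fun z => ∑' n, c n * z ^ n) (∑' n, c n * (n * z ^ (n - 1))) z := by
  refine hasDerivAt_tsum_of_isPreconnected hc isOpen_ball (convex_ball 0 1).isPreconnected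
    (fun n y _ => (hasDerivAt_pow n y).const_mul (c n)) (fun n y hy => ?_) (mem_ball_self one_pos)
    (summable_of_ne_finset_zero (s := {0}) fun n hn => ?_) hz
  · rw [norm_mul, norm_mul, norm_pow, Complex.norm_natCast, mul_left_comm, ← mul_assoc]
    exact mul_le_of_le_one_right (by positivity)
      (pow_le_one₀ (norm_nonneg y) (mem_ball_zero_iff.1 hy).le)
  · simp [zero_pow (by simpa using hn : n ≠ 0)]

theorem hasDerivAt_tsum_mul_pow_zero (hc : Summable fun n => n * ‖c n‖) :
    HasDerivAt (fun z => ∑' n, c n * z ^ n) (c 1) 0 := by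
  convert hasDerivAt_tsum_mul_pow hc (mem_ball_self one_pos)
  rw [tsum_eq_single 1 fun n hn => ?_]
  · simp
  · rcases n with _ | _ | n <;> simp_all

theorem differentiableOn_tsum_mul_pow (hc : Summable fun n => n * ‖c n‖) :
    DifferentiableOn ℂ (fun z => ∑' n, c n * z ^ n) (ball 0 1) := fun _ hz =>
  (hasDerivAt_tsum_mul_pow hc hz).differentiableAt.differentiableWithinAt

theorem norm_tsum_mul_pow_sub_le (hc : Summable fun n => ‖c n‖)
    (hc' : Summable fun n => n * ‖c n‖) {x y : ℂ} (hx : ‖x‖ ≤ 1) (hy : ‖y‖ ≤ 1) :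
    ‖∑' n, c n * x ^ n - ∑' n, c n * y ^ n‖ ≤ (∑' n, n * ‖c n‖) * ‖x - y‖ := by
  have hterm : ∀ n, ‖c n * x ^ n - c n * y ^ n‖ ≤ n * ‖c n‖ * ‖x - y‖ := fun n => by
    rw [← mul_sub, norm_mul, mul_comm (n : ℝ), mul_assoc]
    exact mul_le_mul_of_nonneg_left (norm_pow_sub_pow_le hx hy n) (norm_nonneg _)
  rw [← (summable_mul_pow hc hx).tsum_sub (summable_mul_pow hc hy), ← tsum_mul_right]
  exact tsum_of_norm_bounded (hc'.mul_right _).hasSum hterm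

end PowerSeries

def harmonicSum (P Q : ℕ → ℂ) (z : ℂ) : ℂ :=
  z + ∑' n, P n * z ^ n + conj (∑' n, Q n * z ^ n)

section HarmonicSum

variable {P Q : ℕ → ℂ}

theorem norm_harmonicSum_sub_sub_le (hP : Summable fun n => ‖P n‖)
    (hQ : Summable fun n => ‖Q n‖) (hP' : Summable fun n : ℕ => n * ‖P n‖)
    (hQ' : Summable fun n : ℕ => n * ‖Q n‖) {x y : ℂ} (hx : ‖x‖ ≤ 1) (hy : ‖y‖ ≤ 1) :
    ‖harmonicSum P Q x - harmonicSum P Q y - (x - y)‖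
      ≤ (∑' n : ℕ, n * (‖P n‖ + ‖Q n‖)) * ‖x - y‖ :=
  calc ‖harmonicSum P Q x - harmonicSum P Q y - (x - y)‖
      = ‖(∑' n, P n * x ^ n - ∑' n, P n * y ^ n)
          + conj (∑' n, Q n * x ^ n - ∑' n, Q n * y ^ n)‖ := by
        rw [harmonicSum, harmonicSum, map_sub]; ring_nf
    _ ≤ (∑' n : ℕ, n * ‖P n‖) * ‖x - y‖ + (∑' n : ℕ, n * ‖Q n‖) * ‖x - y‖ := by
        refine (norm_add_le _ _).trans (add_le_add ?_ ?_)
        · exact norm_tsum_mul_pow_sub_le hP hP' hx hy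
        · rw [RCLike.norm_conj]; exact norm_tsum_mul_pow_sub_le hQ hQ' hx hy
    _ = (∑' n : ℕ, n * (‖P n‖ + ‖Q n‖)) * ‖x - y‖ := by
        simp only [mul_add]; rw [hP'.tsum_add hQ', add_mul]

theorem continuousOn_harmonicSum (hP : Summable fun n => ‖P n‖)
    (hQ : Summable fun n => ‖Q n‖) : ContinuousOn (harmonicSum P Q) (closedBall 0 1) :=
  (continuousOn_id.add (continuousOn_tsum_mul_pow hP)).add
    (continuous_conj.comp_continuousOn (continuousOn_tsum_mul_pow hQ))

end HarmonicSum

theorem hasDerivAt_cexp_mul_I (c : ℂ) (θ : ℝ) :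
    HasDerivAt (fun t : ℝ => cexp (c * t * I)) (c * I * cexp (c * θ * I)) θ := by
  have := ((hasDerivAt_id θ).ofReal_comp.const_mul c |>.mul_const I).cexp
  simpa [mul_comm] using this

theorem cexp_int_mul_add_two_pi (m : ℤ) (θ : ℝ) :
    cexp (m * ↑(θ + 2 * π) * I) = cexp (m * θ * I) := by
  rw [show (m : ℂ) * ↑(θ + 2 * π) * I = m * θ * I + m * (2 * π * I) by push_cast; ring,
    exp_add, exp_int_mul_two_pi_mul_I, mul_one]

-- `n (‖P n‖ + ‖Q n‖)` bounds the deviation of the boundary tangent from `exp (θ i)`, and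
-- `(n² - n) ‖P n‖ + (n² + n) ‖Q n‖` that of its derivative from the tangent; this is their sum.
def convexWeight (P Q : ℕ → ℂ) (n : ℕ) : ℝ := n ^ 2 * ‖P n‖ + (n ^ 2 + 2 * n) * ‖Q n‖

/-- `I⁻ᵏ (d/dθ)ᵏ harmonicSum P Q (exp (θ * I))`, computed termwise. -/
def boundaryDeriv (P Q : ℕ → ℂ) (k : ℕ) (θ : ℝ) : ℂ :=
  cexp (θ * I) +
    ∑' n : ℕ, (n : ℂ) ^ k * (P n * cexp (n * θ * I) + (-1) ^ k * conj (Q n) * cexp (-n * θ * I))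

section BoundaryDeriv

variable {P Q : ℕ → ℂ}

theorem norm_boundaryDeriv_term_le (k n : ℕ) (θ : ℝ) :
    ‖(n : ℂ) ^ k * (P n * cexp (n * θ * I) + (-1) ^ k * conj (Q n) * cexp (-n * θ * I))‖
      ≤ n ^ k * (‖P n‖ + ‖Q n‖) := by
  rw [norm_mul, norm_pow, Complex.norm_natCast]
  gcongr
  refine (norm_add_le _ _).trans_eq ?_
  simp [Complex.norm_exp]

theorem hasDerivAt_boundaryDeriv {k : ℕ} (hk : Summable fun n : ℕ => n ^ k * (‖P n‖ + ‖Q n‖))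
    (hk' : Summable fun n : ℕ => n ^ (k + 1) * (‖P n‖ + ‖Q n‖)) (θ : ℝ) :
    HasDerivAt (boundaryDeriv P Q k) (I * boundaryDeriv P Q (k + 1) θ) θ := by
  have hterm : ∀ (n : ℕ) (t : ℝ), HasDerivAt
      (fun t : ℝ => (n : ℂ) ^ k *
        (P n * cexp (n * t * I) + (-1) ^ k * conj (Q n) * cexp (-n * t * I)))
      (I * ((n : ℂ) ^ (k + 1) *
        (P n * cexp (n * t * I) + (-1) ^ (k + 1) * conj (Q n) * cexp (-n * t * I)))) t :=
    fun n t => ((((hasDerivAt_cexp_mul_I n t).const_mul (P n)).add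
        ((hasDerivAt_cexp_mul_I (-n) t).const_mul ((-1) ^ k * conj (Q n)))).const_mul
        ((n : ℂ) ^ k)).congr_deriv (by ring)
  have hsum := hasDerivAt_tsum hk' hterm (fun n t => by
      rw [norm_mul, Complex.norm_I, one_mul]; exact norm_boundaryDeriv_term_le (k + 1) n t)
    (hk.of_norm_bounded fun n => norm_boundaryDeriv_term_le k n 0) θ
  have := (hasDerivAt_cexp_mul_I 1 θ).add hsum
  simp only [one_mul, tsum_mul_left] at this
  exact this.congr_deriv (by rw [boundaryDeriv]; ring)

theorem periodic_boundaryDeriv (P Q : ℕ → ℂ) (k : ℕ) :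
    Function.Periodic (boundaryDeriv P Q k) (2 * π) := fun θ => by
  have h₁ : cexp (↑(θ + 2 * π) * I) = cexp (θ * I) := by
    simpa using cexp_int_mul_add_two_pi 1 θ
  have hn (n : ℕ) : cexp (n * ↑(θ + 2 * π) * I) = cexp (n * θ * I) := by
    simpa using cexp_int_mul_add_two_pi n θ
  have hn' (n : ℕ) : cexp (-n * ↑(θ + 2 * π) * I) = cexp (-n * θ * I) := by
    simpa using cexp_int_mul_add_two_pi (-n) θ
  simp only [boundaryDeriv, h₁, hn, hn']

theorem harmonicSum_cexp (hP : Summable fun n => ‖P n‖) (hQ : Summable fun n => ‖Q n‖) (θ : ℝ) :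
    harmonicSum P Q (cexp (θ * I)) = boundaryDeriv P Q 0 θ := by
  have hz : ‖cexp (θ * I)‖ ≤ 1 := (norm_exp_ofReal_mul_I θ).le
  have hconj (n : ℕ) : conj (cexp (θ * I)) ^ n = cexp (-n * θ * I) := by
    rw [← exp_conj, ← exp_nat_mul, map_mul, conj_ofReal, conj_I]; ring_nf
  rw [harmonicSum, boundaryDeriv, add_assoc, conj_tsum, ← (summable_mul_pow hP hz).tsum_add
    (summable_conj.2 (summable_mul_pow hQ hz))]
  refine congrArg _ (tsum_congr fun n => ?_)
  rw [map_mul, map_pow, hconj, ← exp_nat_mul]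
  ring_nf

theorem norm_boundaryDeriv_one_sub_le (h₁ : Summable fun n : ℕ => n * (‖P n‖ + ‖Q n‖))
    (θ : ℝ) : ‖boundaryDeriv P Q 1 θ - cexp (θ * I)‖ ≤ ∑' n : ℕ, n * (‖P n‖ + ‖Q n‖) := by
  rw [boundaryDeriv, add_sub_cancel_left]
  exact tsum_of_norm_bounded h₁.hasSum fun n => by simpa using norm_boundaryDeriv_term_le 1 n θ

theorem norm_boundaryDeriv_two_sub_one_le (hW : Summable (convexWeight P Q))
    (h₁ : Summable fun n : ℕ => n * (‖P n‖ + ‖Q n‖)) (θ : ℝ) :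
    ‖boundaryDeriv P Q 2 θ - boundaryDeriv P Q 1 θ‖
      ≤ ∑' n, convexWeight P Q n - ∑' n : ℕ, n * (‖P n‖ + ‖Q n‖) := by
  have h₂ : Summable fun n : ℕ => n ^ 2 * (‖P n‖ + ‖Q n‖) :=
    hW.of_nonneg_of_le (fun n => by positivity) fun n => by
      rw [convexWeight]; nlinarith [norm_nonneg (Q n)]
  have hs (k : ℕ) (hk : Summable fun n : ℕ => n ^ k * (‖P n‖ + ‖Q n‖)) := hk.of_norm_bounded
    fun n => norm_boundaryDeriv_term_le (P := P) (Q := Q) k n θ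
  rw [boundaryDeriv, boundaryDeriv, add_sub_add_left_eq_sub, ← (hs 2 h₂).tsum_sub
    (hs 1 (by simpa using h₁)), ← hW.tsum_sub h₁]
  refine tsum_of_norm_bounded (hW.sub h₁).hasSum fun n => ?_
  have hn : (0 : ℝ) ≤ n ^ 2 - n := by
    rcases n with _ | n
    · simp
    · push_cast; nlinarith
  calc _ = ‖((n ^ 2 - n : ℝ) : ℂ) * (P n * cexp (n * θ * I))
        + ((n ^ 2 + n : ℝ) : ℂ) * (conj (Q n) * cexp (-n * θ * I))‖ := by
        congr 1; push_cast; ring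
    _ ≤ (n ^ 2 - n) * ‖P n‖ + (n ^ 2 + n) * ‖Q n‖ := by
        refine (norm_add_le _ _).trans_eq ?_
        simp only [norm_mul, norm_real, Real.norm_of_nonneg hn, RCLike.norm_conj,
          Real.norm_of_nonneg (by positivity : (0 : ℝ) ≤ n ^ 2 + n)]
        simp [Complex.norm_exp]
    _ = convexWeight P Q n - n * (‖P n‖ + ‖Q n‖) := by rw [convexWeight]; ring

end BoundaryDeriv

-- A continuous branch of `arg ∘ w`, as long as `w θ * exp (-θ i)` stays in the slit plane.
def tangentAngle (w : ℝ → ℂ) (θ : ℝ) : ℝ := θ + arg (w θ * cexp (-θ * I))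

section TangentAngle

variable {w u : ℝ → ℂ}

theorem norm_mul_cexp_tangentAngle (w : ℝ → ℂ) (θ : ℝ) :
    (‖w θ‖ : ℂ) * cexp (tangentAngle w θ * I) = w θ := by
  have hnorm : ‖w θ * cexp (-θ * I)‖ = ‖w θ‖ := by simp [Complex.norm_exp]
  calc (‖w θ‖ : ℂ) * cexp (tangentAngle w θ * I)
      = cexp (θ * I) * (‖w θ * cexp (-θ * I)‖ * cexp (arg (w θ * cexp (-θ * I)) * I)) := by
        rw [hnorm, tangentAngle, ofReal_add, add_mul, exp_add]; ring
    _ = w θ := by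
        rw [norm_mul_exp_arg_mul_I, mul_left_comm, ← exp_add]; simp

theorem hasDerivAt_tangentAngle {θ : ℝ} (hw : HasDerivAt w (I * u θ) θ)
    (hslit : w θ * cexp (-θ * I) ∈ slitPlane) :
    HasDerivAt (tangentAngle w) (u θ / w θ).re θ := by
  have hw0 : w θ ≠ 0 := left_ne_zero_of_mul (slitPlane_ne_zero hslit)
  have hm : HasDerivAt (fun t : ℝ => w t * cexp (-t * I))
      (I * u θ * cexp (-θ * I) + w θ * (-1 * I * cexp (-1 * θ * I))) θ :=
    hw.mul (by simpa using hasDerivAt_cexp_mul_I (-1) θ)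
  have harg := (hasDerivAt_id θ).add (imCLM.hasFDerivAt.comp_hasDerivAt θ (hm.clog_real hslit))
  have he : cexp (-θ * I) ≠ 0 := exp_ne_zero _
  have hq : (I * u θ * cexp (-θ * I) + w θ * (-1 * I * cexp (-1 * θ * I)))
      / (w θ * cexp (-θ * I)) = I * (u θ / w θ) - I := by
    field_simp; ring_nf
  have hfun : tangentAngle w = id + imCLM ∘ fun t => log (w t * cexp (-t * I)) := by
    funext t; simp [tangentAngle, log_im]
  rw [hfun]
  exact harg.congr_deriv (by rw [imCLM_apply, hq]; simp)

theorem tangentAngle_add_two_pi (hw : Function.Periodic w (2 * π)) (θ : ℝ) :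
    tangentAngle w (θ + 2 * π) = tangentAngle w θ + 2 * π := by
  have he : cexp (-↑(θ + 2 * π) * I) = cexp (-θ * I) := by
    simpa using cexp_int_mul_add_two_pi (-1) θ
  rw [tangentAngle, tangentAngle, hw θ, he]
  ring

theorem re_div_nonneg_of_re_mul_conj_nonneg {z w : ℂ} (h : 0 ≤ (z * conj w).re) :
    0 ≤ (z / w).re := by
  rw [div_re, ← add_div, show z.re * w.re + z.im * w.im = (z * conj w).re by simp]
  exact div_nonneg h (normSq_nonneg w)

theorem monotone_tangentAngle (hw : ∀ θ, HasDerivAt w (I * u θ) θ)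
    (hslit : ∀ θ : ℝ, w θ * cexp (-θ * I) ∈ slitPlane) (hu : ∀ θ, 0 ≤ (u θ * conj (w θ)).re) :
    Monotone (tangentAngle w) :=
  monotone_of_hasDerivAt_nonneg (fun θ => hasDerivAt_tangentAngle (hw θ) (hslit θ))
    fun θ => re_div_nonneg_of_re_mul_conj_nonneg (hu θ)

end TangentAngle

theorem re_I_mul_mul_conj_polar (r s a b : ℝ) :
    (I * (r * cexp (a * I)) * conj (s * cexp (b * I))).re = -(r * s * Real.sin (a - b)) := by
  have hconj : conj (cexp (b * I)) = cexp (-b * I) := by rw [← exp_conj]; simp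
  have hexp : cexp ((a - b : ℝ) * I) = cexp (a * I) * cexp (-b * I) := by
    rw [← exp_add]; push_cast; ring_nf
  rw [map_mul, conj_ofReal, hconj, show I * (r * cexp (a * I)) * (s * cexp (-b * I))
    = ((r * s : ℝ) : ℂ) * (I * cexp ((a - b : ℝ) * I)) by rw [hexp]; push_cast; ring,
    re_ofReal_mul, exp_mul_I, ← ofReal_cos, ← ofReal_sin]
  simp only [mul_add, add_re, mul_re, mul_im, I_re, I_im, ofReal_re, ofReal_im]
  ring

theorem nonpos_of_antitoneOn_of_monotoneOn {f : ℝ → ℝ} {a b c : ℝ}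
    (hac : a ≤ c) (hcb : c ≤ b) (h₁ : AntitoneOn f (Icc a c)) (h₂ : MonotoneOn f (Icc c b))
    (ha : f a ≤ 0) (hb : f b ≤ 0) {x : ℝ} (hx : x ∈ Icc a b) : f x ≤ 0 := by
  rcases le_total x c with hxc | hcx
  · exact (h₁ ⟨le_rfl, hac⟩ ⟨hx.1, hxc⟩ hx.1).trans ha
  · exact (h₂ ⟨hcx, hx.2⟩ ⟨hcb, le_rfl⟩ hx.2).trans hb

/-- A closed curve whose tangent direction `exp (A θ i)` turns monotonically, once around in
total, lies on one side of each of its tangent lines. -/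
theorem re_sub_mul_conj_nonpos_of_monotone {γ w : ℝ → ℂ} {A : ℝ → ℝ}
    (hγ : Function.Periodic γ (2 * π)) (hγ' : ∀ θ, HasDerivAt γ (I * w θ) θ)
    (hwA : ∀ θ, w θ = ‖w θ‖ * cexp (A θ * I)) (hA : Monotone A) (hAc : Continuous A)
    (hA2π : ∀ θ, A (θ + 2 * π) = A θ + 2 * π) (θ₀ θ : ℝ) :
    ((γ θ - γ θ₀) * conj (w θ₀)).re ≤ 0 := by
  set ψ : ℝ → ℝ := fun t => ((γ t - γ θ₀) * conj (w θ₀)).re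
  have hψ' (t : ℝ) : HasDerivAt ψ (-(‖w t‖ * ‖w θ₀‖ * Real.sin (A t - A θ₀))) t := by
    have := reCLM.hasFDerivAt.comp_hasDerivAt t (((hγ' t).sub_const (γ θ₀)).mul_const
      (conj (w θ₀)))
    refine this.congr_deriv ?_
    conv_lhs => rw [reCLM_apply, hwA t, hwA θ₀]
    exact re_I_mul_mul_conj_polar ..
  have hψc : Continuous ψ := continuous_iff_continuousAt.2 fun t => (hψ' t).continuousAt
  obtain ⟨θ₁, hθ₁, hAθ₁⟩ : ∃ θ₁ ∈ Icc θ₀ (θ₀ + 2 * π), A θ₁ = A θ₀ + π :=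
    intermediate_value_Icc (by linarith [Real.pi_pos]) hAc.continuousOn
      ⟨by linarith [Real.pi_pos], by linarith [hA2π θ₀, Real.pi_pos]⟩
  have hanti : AntitoneOn ψ (Icc θ₀ θ₁) := by
    refine antitoneOn_of_hasDerivWithinAt_nonpos (convex_Icc _ _) hψc.continuousOn
      (fun t _ => (hψ' t).hasDerivWithinAt) fun t ht => ?_
    rw [interior_Icc] at ht
    have h₁ := hA ht.1.le
    have h₂ := hA ht.2.le
    have := Real.sin_nonneg_of_nonneg_of_le_pi (x := A t - A θ₀) (by linarith) (by linarith)
    have := mul_nonneg (mul_nonneg (norm_nonneg (w t)) (norm_nonneg (w θ₀))) this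
    linarith
  have hmono : MonotoneOn ψ (Icc θ₁ (θ₀ + 2 * π)) := by
    refine monotoneOn_of_hasDerivWithinAt_nonneg (convex_Icc _ _) hψc.continuousOn
      (fun t _ => (hψ' t).hasDerivWithinAt) fun t ht => ?_
    rw [interior_Icc] at ht
    have h₁ := hA ht.1.le
    have h₂ := hA ht.2.le
    rw [hA2π] at h₂
    have := Real.sin_nonpos_of_nonpos_of_neg_pi_le (x := A t - A θ₀ - 2 * π) (by linarith)
      (by linarith)
    rw [Real.sin_sub_two_pi] at this
    have := mul_nonpos_of_nonneg_of_nonpos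
      (mul_nonneg (norm_nonneg (w t)) (norm_nonneg (w θ₀))) this
    linarith
  have hψ₀ : ψ θ₀ = 0 := by simp [ψ]
  obtain ⟨t, ht, hψt⟩ := (show Function.Periodic ψ (2 * π) from fun t => by simp [ψ, hγ t])
    |>.exists_mem_Ico Real.two_pi_pos θ θ₀
  change ψ θ ≤ 0
  rw [hψt]
  exact nonpos_of_antitoneOn_of_monotoneOn hθ₁.1 hθ₁.2 hanti hmono hψ₀.le
    (by rw [show ψ (θ₀ + 2 * π) = ψ θ₀ by simp [ψ, hγ θ₀], hψ₀]) (Ico_subset_Icc_self ht)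

theorem re_mul_conj_nonneg_of_norm_sub_le {u w : ℂ} (h : ‖u - w‖ ≤ ‖w‖) :
    0 ≤ (u * conj w).re := by
  have hre := abs_le.1 ((abs_re_le_norm ((u - w) * conj w)).trans_eq
    (by rw [norm_mul, RCLike.norm_conj]))
  rw [show u * conj w = w * conj w + (u - w) * conj w by ring, add_re, mul_conj, ofReal_re,
    normSq_eq_norm_sq]
  nlinarith [norm_nonneg w, norm_nonneg (u - w)]

section MaximumPrinciple

variable {Φ : ℂ → ℂ} {U : Set ℂ} {C : ℝ}

theorem re_le_of_forall_frontier_re_le (hU : Bornology.IsBounded U) (hΦ : DiffContOnCl ℂ Φ U)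
    (hC : ∀ v ∈ frontier U, (Φ v).re ≤ C) {z : ℂ} (hz : z ∈ closure U) : (Φ z).re ≤ C := by
  have hexp : DiffContOnCl ℂ (fun v => cexp (Φ v)) U :=
    ⟨hΦ.differentiableOn.cexp, continuous_exp.comp_continuousOn hΦ.continuousOn⟩
  have := Complex.norm_le_of_forall_mem_frontier_norm_le hU hexp
    (fun v hv => by rw [norm_exp]; exact Real.exp_le_exp.2 (hC v hv)) hz
  rwa [norm_exp, Real.exp_le_exp] at this

theorem re_lt_of_forall_frontier_re_le (hU : Bornology.IsBounded U) (hUo : IsOpen U)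
    (hUc : IsPreconnected U) (hΦ : DiffContOnCl ℂ Φ U) (hC : ∀ v ∈ frontier U, (Φ v).re ≤ C)
    {z₀ d : ℂ} (hz₀ : z₀ ∈ U) (hd : HasDerivAt Φ d z₀) (hd₀ : d ≠ 0) {z : ℂ} (hz : z ∈ U) :
    (Φ z).re < C := by
  have hle : ∀ v ∈ U, (Φ v).re ≤ C := fun v hv =>
    re_le_of_forall_frontier_re_le hU hΦ hC (subset_closure hv)
  refine (hle z hz).lt_of_ne fun hzC => ?_
  have hmax : IsMaxOn (norm ∘ fun v => cexp (Φ v)) U z := fun v hv => by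
    change ‖cexp (Φ v)‖ ≤ ‖cexp (Φ z)‖
    rw [norm_exp, norm_exp, hzC]
    exact Real.exp_le_exp.2 (hle v hv)
  have hconst := Complex.eqOn_of_isPreconnected_of_isMaxOn_norm hUc hUo
    hΦ.differentiableOn.cexp hz hmax
  have h₀ : HasDerivAt (fun v => cexp (Φ v)) 0 z₀ :=
    (hasDerivAt_const z₀ _).congr_of_eventuallyEq
      (Filter.eventually_of_mem (hUo.mem_nhds hz₀) hconst)
  exact mul_ne_zero (exp_ne_zero _) hd₀ (hd.cexp.unique h₀)

end MaximumPrinciple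

def tangentHalfPlanes (γ w : ℝ → ℂ) : Set ℂ := {ω | ∀ θ, ((ω - γ θ) * conj (w θ)).re < 0}

theorem convex_tangentHalfPlanes (γ w : ℝ → ℂ) : Convex ℝ (tangentHalfPlanes γ w) := by
  have : tangentHalfPlanes γ w = ⋂ θ, {ω | (ω * conj (w θ)).re < (γ θ * conj (w θ)).re} := by
    ext ω; simp [tangentHalfPlanes, sub_mul]
  rw [this]
  exact convex_iInter fun θ => convex_halfSpace_lt
    ⟨fun x y => by simp [add_mul], fun a x => by simp [mul_assoc]⟩ _

structure ConvexCoeffs (P Q : ℕ → ℂ) : Prop where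
  left_eq_zero : ∀ n < 2, P n = 0
  right_eq_zero : ∀ n < 2, Q n = 0
  summable : Summable (convexWeight P Q)
  tsum_le_one : ∑' n, convexWeight P Q n ≤ 1

namespace ConvexCoeffs

variable {P Q : ℕ → ℂ} (h : ConvexCoeffs P Q)
include h

theorem pow_mul_le_convexWeight {k : ℕ} (hk : k ≤ 2) (n : ℕ) :
    (n : ℝ) ^ k * (‖P n‖ + ‖Q n‖) ≤ convexWeight P Q n := by
  rcases lt_or_ge n 2 with hn | hn
  · simp [h.left_eq_zero n hn, h.right_eq_zero n hn, convexWeight]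
  · have hnk : (n : ℝ) ^ k ≤ n ^ 2 := pow_le_pow_right₀ (by norm_cast; omega) hk
    rw [convexWeight]
    nlinarith [norm_nonneg (P n), norm_nonneg (Q n),
      mul_nonneg (Nat.cast_nonneg n) (norm_nonneg (Q n))]

theorem two_mul_le_convexWeight (n : ℕ) :
    2 * ((n : ℝ) * (‖P n‖ + ‖Q n‖)) ≤ convexWeight P Q n := by
  rcases lt_or_ge n 2 with hn | hn
  · simp [h.left_eq_zero n hn, h.right_eq_zero n hn, convexWeight]
  · have hn' : (0 : ℝ) ≤ n ^ 2 - 2 * n := by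
      have : (2 : ℝ) ≤ n := by exact_mod_cast hn
      nlinarith
    rw [convexWeight]
    nlinarith [mul_nonneg hn' (norm_nonneg (P n)),
      mul_nonneg (sq_nonneg (n : ℝ)) (norm_nonneg (Q n))]

theorem summable_pow_mul {k : ℕ} (hk : k ≤ 2) :
    Summable fun n : ℕ => (n : ℝ) ^ k * (‖P n‖ + ‖Q n‖) :=
  h.summable.of_nonneg_of_le (fun _ => by positivity) (h.pow_mul_le_convexWeight hk)

theorem summable_pow_mul_left {k : ℕ} (hk : k ≤ 2) : Summable fun n : ℕ => (n : ℝ) ^ k * ‖P n‖ :=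
  (h.summable_pow_mul hk).of_nonneg_of_le (fun _ => by positivity) fun n =>
    mul_le_mul_of_nonneg_left (le_add_of_nonneg_right (norm_nonneg (Q n))) (by positivity)

theorem summable_pow_mul_right {k : ℕ} (hk : k ≤ 2) : Summable fun n : ℕ => (n : ℝ) ^ k * ‖Q n‖ :=
  (h.summable_pow_mul hk).of_nonneg_of_le (fun _ => by positivity) fun n =>
    mul_le_mul_of_nonneg_left (le_add_of_nonneg_left (norm_nonneg (P n))) (by positivity)

theorem summable_mul : Summable fun n : ℕ => (n : ℝ) * (‖P n‖ + ‖Q n‖) := by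
  simpa using h.summable_pow_mul (k := 1) (by norm_num)

theorem tsum_mul_le_half : ∑' n : ℕ, (n : ℝ) * (‖P n‖ + ‖Q n‖) ≤ 1 / 2 := by
  have := (h.summable_mul.mul_left 2).tsum_le_tsum h.two_mul_le_convexWeight h.summable
  rw [tsum_mul_left] at this
  linarith [h.tsum_le_one]

theorem summable_norm_left : Summable fun n => ‖P n‖ := by
  simpa using h.summable_pow_mul_left (k := 0) (by norm_num)

theorem summable_norm_right : Summable fun n => ‖Q n‖ := by
  simpa using h.summable_pow_mul_right (k := 0) (by norm_num)

theorem summable_mul_norm_left : Summable fun n : ℕ => (n : ℝ) * ‖P n‖ := by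
  simpa using h.summable_pow_mul_left (k := 1) (by norm_num)

theorem summable_mul_norm_right : Summable fun n : ℕ => (n : ℝ) * ‖Q n‖ := by
  simpa using h.summable_pow_mul_right (k := 1) (by norm_num)

theorem approximatesLinearOn_harmonicSum :
    ApproximatesLinearOn (harmonicSum P Q) (ContinuousLinearEquiv.refl ℂ ℂ : ℂ →L[ℂ] ℂ)
      (closedBall 0 1) (1 / 2) := fun x hx y hy => by
  have := norm_harmonicSum_sub_sub_le h.summable_norm_left h.summable_norm_right
    h.summable_mul_norm_left h.summable_mul_norm_right
    (mem_closedBall_zero_iff.1 hx) (mem_closedBall_zero_iff.1 hy)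
  simpa using this.trans (mul_le_mul_of_nonneg_right h.tsum_mul_le_half (norm_nonneg _))

theorem injOn_harmonicSum : InjOn (harmonicSum P Q) (ball 0 1) :=
  (h.approximatesLinearOn_harmonicSum.injOn (Or.inr (by simp; norm_num))).mono
    ball_subset_closedBall

theorem isOpen_image_harmonicSum : IsOpen (harmonicSum P Q '' ball 0 1) :=
  (h.approximatesLinearOn_harmonicSum.mono_set ball_subset_closedBall).open_image
    (ContinuousLinearEquiv.refl ℂ ℂ).toNonlinearRightInverse isOpen_ball
    (Or.inr (by change _ < ‖_‖₊⁻¹; simp; norm_num))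

theorem boundaryDeriv_one_mul_mem_slitPlane (θ : ℝ) :
    boundaryDeriv P Q 1 θ * cexp (-θ * I) ∈ slitPlane := by
  have he : cexp (θ * I) * cexp (-θ * I) = 1 := by rw [← exp_add]; simp
  have hnorm : ‖boundaryDeriv P Q 1 θ * cexp (-θ * I) - 1‖ ≤ 1 / 2 := by
    rw [← he, ← sub_mul, norm_mul, show ‖cexp (-θ * I)‖ = 1 by simp [norm_exp], mul_one]
    exact (norm_boundaryDeriv_one_sub_le h.summable_mul θ).trans h.tsum_mul_le_half
  have hre := abs_le.1 ((abs_re_le_norm _).trans hnorm)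
  rw [sub_re, one_re] at hre
  exact mem_slitPlane_iff.2 (Or.inl (by linarith [hre.1]))

theorem re_boundaryDeriv_two_mul_conj_nonneg (θ : ℝ) :
    0 ≤ (boundaryDeriv P Q 2 θ * conj (boundaryDeriv P Q 1 θ)).re := by
  refine re_mul_conj_nonneg_of_norm_sub_le ?_
  have h₁ := norm_boundaryDeriv_one_sub_le h.summable_mul θ
  calc ‖boundaryDeriv P Q 2 θ - boundaryDeriv P Q 1 θ‖
      ≤ ∑' n, convexWeight P Q n - ∑' n : ℕ, n * (‖P n‖ + ‖Q n‖) :=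
        norm_boundaryDeriv_two_sub_one_le h.summable h.summable_mul θ
    _ ≤ ‖cexp (θ * I)‖ - ‖boundaryDeriv P Q 1 θ - cexp (θ * I)‖ := by
        rw [norm_exp_ofReal_mul_I]; linarith [h.tsum_le_one]
    _ ≤ ‖boundaryDeriv P Q 1 θ‖ := by
        linarith [norm_sub_norm_le (cexp (θ * I)) (boundaryDeriv P Q 1 θ),
          norm_sub_rev (cexp (θ * I)) (boundaryDeriv P Q 1 θ)]

theorem hasDerivAt_boundaryDeriv_of_le {k : ℕ} (hk : k ≤ 1) (θ : ℝ) :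
    HasDerivAt (boundaryDeriv P Q k) (I * boundaryDeriv P Q (k + 1) θ) θ :=
  hasDerivAt_boundaryDeriv (h.summable_pow_mul (by omega)) (h.summable_pow_mul (by omega)) θ

theorem re_boundaryDeriv_sub_mul_conj_nonpos (θ₀ θ : ℝ) :
    ((boundaryDeriv P Q 0 θ - boundaryDeriv P Q 0 θ₀) * conj (boundaryDeriv P Q 1 θ₀)).re ≤ 0 :=
  re_sub_mul_conj_nonpos_of_monotone (periodic_boundaryDeriv P Q 0)
    (h.hasDerivAt_boundaryDeriv_of_le zero_le_one)
    (fun θ => (norm_mul_cexp_tangentAngle _ θ).symm)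
    (monotone_tangentAngle (h.hasDerivAt_boundaryDeriv_of_le le_rfl)
      h.boundaryDeriv_one_mul_mem_slitPlane h.re_boundaryDeriv_two_mul_conj_nonneg)
    (continuous_iff_continuousAt.2 fun θ =>
      (hasDerivAt_tangentAngle (h.hasDerivAt_boundaryDeriv_of_le le_rfl θ)
        (h.boundaryDeriv_one_mul_mem_slitPlane θ)).continuousAt)
    (tangentAngle_add_two_pi (periodic_boundaryDeriv P Q 1)) θ₀ θ

theorem harmonicSum_eq_boundaryDeriv_arg {v : ℂ} (hv : ‖v‖ = 1) :
    harmonicSum P Q v = boundaryDeriv P Q 0 (arg v) := by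
  conv_lhs => rw [← norm_mul_exp_arg_mul_I v, hv, ofReal_one, one_mul]
  exact harmonicSum_cexp h.summable_norm_left h.summable_norm_right _

theorem harmonicSum_mem_tangentHalfPlanes {z : ℂ} (hz : z ∈ ball 0 1) :
    harmonicSum P Q z ∈ tangentHalfPlanes (boundaryDeriv P Q 0) (boundaryDeriv P Q 1) :=
  fun θ₀ => by
  set c := boundaryDeriv P Q 1 θ₀
  set γ₀ := boundaryDeriv P Q 0 θ₀
  -- `Φ` is holomorphic and `Re Φ` differs from the half-plane functional by a constant.
  set Φ : ℂ → ℂ := fun v => (v + ∑' n, P n * v ^ n) * conj c + (∑' n, Q n * v ^ n) * c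
  have hre (v : ℂ) : ((harmonicSum P Q v - γ₀) * conj c).re = (Φ v).re - (γ₀ * conj c).re := by
    simp only [Φ, harmonicSum, add_mul, sub_mul, sub_re, add_re, ← map_mul, conj_re]
  have hΦ : DiffContOnCl ℂ Φ (ball 0 1) := by
    refine ⟨((differentiableOn_id.add (differentiableOn_tsum_mul_pow h.summable_mul_norm_left)
      ).mul_const _).add ((differentiableOn_tsum_mul_pow h.summable_mul_norm_right).mul_const _),
      ?_⟩
    rw [closure_ball 0 one_ne_zero]
    exact ((continuousOn_id.add (continuousOn_tsum_mul_pow h.summable_norm_left)).mul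
      continuousOn_const).add
      ((continuousOn_tsum_mul_pow h.summable_norm_right).mul continuousOn_const)
  have hd : HasDerivAt Φ (conj c) 0 :=
    ((((hasDerivAt_id 0).add (hasDerivAt_tsum_mul_pow_zero h.summable_mul_norm_left)).mul_const
      (conj c)).add ((hasDerivAt_tsum_mul_pow_zero h.summable_mul_norm_right).mul_const c)
      ).congr_deriv (by simp [h.left_eq_zero 1 one_lt_two, h.right_eq_zero 1 one_lt_two])
  have hc : c ≠ 0 :=
    left_ne_zero_of_mul (slitPlane_ne_zero (h.boundaryDeriv_one_mul_mem_slitPlane θ₀))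
  rw [hre, sub_neg]
  refine re_lt_of_forall_frontier_re_le isBounded_ball isOpen_ball
    (convex_ball 0 1).isPreconnected hΦ (fun v hv => ?_) (mem_ball_self one_pos) hd
    ((map_ne_zero _).2 hc) hz
  rw [frontier_ball 0 one_ne_zero, mem_sphere_zero_iff_norm] at hv
  have := h.re_boundaryDeriv_sub_mul_conj_nonpos θ₀ (arg v)
  rw [← h.harmonicSum_eq_boundaryDeriv_arg hv, hre] at this
  linarith

theorem closure_image_harmonicSum_inter_subset :
    closure (harmonicSum P Q '' ball 0 1) ∩ tangentHalfPlanes (boundaryDeriv P Q 0)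
      (boundaryDeriv P Q 1) ⊆ harmonicSum P Q '' ball 0 1 := by
  rintro ω ⟨hcl, hω⟩
  obtain ⟨ζ, hζ, rfl⟩ : ω ∈ harmonicSum P Q '' closedBall 0 1 :=
    closure_minimal (image_mono ball_subset_closedBall)
      ((isCompact_closedBall 0 1).image_of_continuousOn
        (continuousOn_harmonicSum h.summable_norm_left h.summable_norm_right)).isClosed hcl
  rcases (mem_closedBall_zero_iff.1 hζ).lt_or_eq with hlt | hone
  · exact ⟨ζ, mem_ball_zero_iff.2 hlt, rfl⟩
  · have := hω (arg ζ)
    rw [h.harmonicSum_eq_boundaryDeriv_arg hone, sub_self, zero_mul, zero_re] at this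
    exact absurd this (lt_irrefl 0)

theorem image_harmonicSum_eq_tangentHalfPlanes :
    harmonicSum P Q '' ball 0 1 = tangentHalfPlanes (boundaryDeriv P Q 0) (boundaryDeriv P Q 1) :=
  (image_subset_iff.2 fun _ => h.harmonicSum_mem_tangentHalfPlanes).antisymm <|
    (convex_tangentHalfPlanes _ _).isPreconnected.subset_of_closure_inter_subset
      h.isOpen_image_harmonicSum
      ⟨_, h.harmonicSum_mem_tangentHalfPlanes (mem_ball_self one_pos),
        mem_image_of_mem _ (mem_ball_self one_pos)⟩ h.closure_image_harmonicSum_inter_subset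

theorem convex_image_harmonicSum : Convex ℝ (harmonicSum P Q '' ball 0 1) :=
  h.image_harmonicSum_eq_tangentHalfPlanes ▸ convex_tangentHalfPlanes _ _

theorem harmMap_eqOn_harmonicSum : EqOn (harmMap P Q) (harmonicSum P Q) (ball 0 1) := by
  intro z hz
  have hz' := (mem_ball_zero_iff.1 hz).le
  rw [harmMap, harmonicSum, add_assoc, conj_tsum,
    ← (summable_mul_pow h.summable_norm_left hz').tsum_add
      (summable_conj.2 (summable_mul_pow h.summable_norm_right hz'))]
  refine congrArg _ (tsum_congr fun n => ?_)
  split_ifs with hn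
  · rw [map_mul, map_pow]
  · simp [h.left_eq_zero n (not_le.1 hn), h.right_eq_zero n (not_le.1 hn)]

theorem injOn_harmMap : InjOn (harmMap P Q) (ball 0 1) :=
  h.injOn_harmonicSum.congr h.harmMap_eqOn_harmonicSum.symm

theorem convex_image_harmMap : Convex ℝ (harmMap P Q '' ball 0 1) :=
  h.harmMap_eqOn_harmonicSum.image_eq ▸ h.convex_image_harmonicSum

end ConvexCoeffs

def integralConvolutionCoeff (a A : ℕ → ℂ) (n : ℕ) : ℂ := if 2 ≤ n then a n * A n / n else 0

theorem harmMap_integralConvolutionCoeff (a b A B : ℕ → ℂ) :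
    harmMap (integralConvolutionCoeff a A) (integralConvolutionCoeff b B)
      = harmMap (fun n => a n * A n / n) (fun n => b n * B n / n) := by
  funext z
  refine congrArg _ (tsum_congr fun n => ?_)
  split_ifs with hn <;> simp [integralConvolutionCoeff, hn]

theorem mul_add_mul_le_of_coeff_bounds {n lam x y α β : ℝ} (hn : 2 ≤ n) (hlam : 1 / 2 ≤ lam)
    (hx : 0 ≤ x) (hy : 0 ≤ y) (hα : 2 * α ≤ n + 1) (hβ : 2 * β ≤ n - 1) :
    n * (x * α) + (n + 2) * (y * β) ≤ n * (lam * n + 1 - lam) * (x + y) := by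
  have hμ : (n + 1) / 2 ≤ lam * n + 1 - lam := by nlinarith
  nlinarith [mul_le_mul_of_nonneg_left hα (by positivity : 0 ≤ n * x),
    mul_le_mul_of_nonneg_left hβ (by positivity : 0 ≤ (n + 2) * y),
    mul_le_mul_of_nonneg_left hμ (by positivity : 0 ≤ n * (x + y))]

theorem convexWeight_integralConvolutionCoeff (a b A B : ℕ → ℂ) {n : ℕ} (hn : 2 ≤ n) :
    convexWeight (integralConvolutionCoeff a A) (integralConvolutionCoeff b B) n
      = n * (‖a n‖ * ‖A n‖) + (n + 2) * (‖b n‖ * ‖B n‖) := by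
  have : (n : ℝ) ≠ 0 := by norm_cast; omega
  simp only [convexWeight, integralConvolutionCoeff, if_pos hn, norm_div, norm_mul, norm_natCast]
  field_simp

theorem convexCoeffs_integralConvolutionCoeff {lam : ℝ} (hlam : 1 / 2 ≤ lam) {a b A B : ℕ → ℂ}
    (habSum : Summable fun n : ℕ => if 2 ≤ n then
      (n : ℝ) * (lam * n + 1 - lam) * (‖a n‖ + ‖b n‖) else 0)
    (hF : ∑' n : ℕ, (if 2 ≤ n then
      (n : ℝ) * (lam * n + 1 - lam) * (‖a n‖ + ‖b n‖) else 0) ≤ 1)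
    (hA : ∀ n : ℕ, 2 ≤ n → 2 * ‖A n‖ ≤ (n : ℝ) + 1)
    (hB : ∀ n : ℕ, 2 ≤ n → 2 * ‖B n‖ ≤ (n : ℝ) - 1) :
    ConvexCoeffs (integralConvolutionCoeff a A) (integralConvolutionCoeff b B) := by
  have hzero (c C : ℕ → ℂ) (n : ℕ) (hn : n < 2) : integralConvolutionCoeff c C n = 0 :=
    if_neg (by omega)
  have hle (n : ℕ) : convexWeight (integralConvolutionCoeff a A) (integralConvolutionCoeff b B) n
      ≤ if 2 ≤ n then (n : ℝ) * (lam * n + 1 - lam) * (‖a n‖ + ‖b n‖) else 0 := by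
    split_ifs with hn
    · rw [convexWeight_integralConvolutionCoeff a b A B hn]
      exact mul_add_mul_le_of_coeff_bounds (by exact_mod_cast hn) hlam (norm_nonneg _)
        (norm_nonneg _) (hA n hn) (hB n hn)
    · simp [convexWeight, hzero _ _ n (not_le.1 hn)]
  have hsum := habSum.of_nonneg_of_le (fun n => by rw [convexWeight]; positivity) hle
  exact ⟨hzero a A, hzero b B, hsum, (hsum.tsum_le_tsum hle habSum).trans hF⟩

theorem hc0Weight_le_convexWeight_integralConvolutionCoeff (a b A B : ℕ → ℂ) (n : ℕ) :
    (if 2 ≤ n then (n : ℝ) ^ 2 * (‖a n * A n‖ + ‖b n * B n‖) / n else 0)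
      ≤ convexWeight (integralConvolutionCoeff a A) (integralConvolutionCoeff b B) n := by
  split_ifs with hn
  · have : (n : ℝ) ≠ 0 := by norm_cast; omega
    rw [convexWeight_integralConvolutionCoeff a b A B hn, norm_mul, norm_mul]
    field_simp
    nlinarith [mul_nonneg (norm_nonneg (b n)) (norm_nonneg (B n))]
  · rw [convexWeight]; positivity

end HarmonicConvex

end

theorem integral_convolution_univalent_convex_general
    (lam : ℝ) (hlam : lam ∈ Set.Icc (1 / 2 : ℝ) 1)
    (a b A B : ℕ → ℂ)
    (habSum : Summable (fun n : ℕ => if 2 ≤ n then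
      (n : ℝ) * (lam * n + 1 - lam) * (‖a n‖ + ‖b n‖) else 0))
    (hF : ∑' n : ℕ, (if 2 ≤ n then
      (n : ℝ) * (lam * n + 1 - lam) * (‖a n‖ + ‖b n‖) else 0) ≤ 1)
    (hA : ∀ n : ℕ, 2 ≤ n → 2 * ‖A n‖ ≤ (n : ℝ) + 1)
    (hB : ∀ n : ℕ, 2 ≤ n → 2 * ‖B n‖ ≤ (n : ℝ) - 1) :
    (∑' n : ℕ, (if 2 ≤ n then
        (n : ℝ) ^ 2 * (‖a n * A n‖ + ‖b n * B n‖) / n else 0)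
      ≤ 1) ∧
    Set.InjOn (harmMap (fun n => a n * A n / n) (fun n => b n * B n / n))
      (Metric.ball (0 : ℂ) 1) ∧
    Convex ℝ (harmMap (fun n => a n * A n / n) (fun n => b n * B n / n) ''
      Metric.ball (0 : ℂ) 1) := by
  have h := HarmonicConvex.convexCoeffs_integralConvolutionCoeff hlam.1 habSum hF hA hB
  have hle := HarmonicConvex.hc0Weight_le_convexWeight_integralConvolutionCoeff a b A B
  rw [← HarmonicConvex.harmMap_integralConvolutionCoeff]
  refine ⟨?_, h.injOn_harmMap, h.convex_image_harmMap⟩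
  have hsum := h.summable.of_nonneg_of_le (fun n => by split_ifs <;> positivity) hle
  exact (hsum.tsum_le_tsum hle h.summable).trans h.tsum_le_one

/-- If `F ∈ HS_1^0(λ)` with `1/2 ≤ λ ≤ 1` and the coefficients of `H` satisfy the
bounds valid on the class `C_H^0` of harmonic univalent convex mappings, then the
integral convolution `F⋄H` belongs to `HC^0`, is univalent on the unit disk, and its
image is convex. -/
theorem integral_convolution_univalent_convex
    (lam : ℝ) (hlam : lam ∈ Set.Icc (1 / 2 : ℝ) 1)
    (a b A B : ℕ → ℂ)
    (hab : Summable (fun n : ℕ => ‖a n‖ + ‖b n‖))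
    (habSum : Summable (fun n : ℕ => if 2 ≤ n then
      (n : ℝ) * (lam * n + 1 - lam) * (‖a n‖ + ‖b n‖) else 0))
    (hF : ∑' n : ℕ, (if 2 ≤ n then
      (n : ℝ) * (lam * n + 1 - lam) * (‖a n‖ + ‖b n‖) else 0) ≤ 1)
    (hA : ∀ n : ℕ, 2 ≤ n → 2 * ‖A n‖ ≤ (n : ℝ) + 1)
    (hB : ∀ n : ℕ, 2 ≤ n → 2 * ‖B n‖ ≤ (n : ℝ) - 1) :
    (∑' n : ℕ, (if 2 ≤ n then
        (n : ℝ) ^ 2 * (‖a n * A n‖ + ‖b n * B n‖) / n else 0)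
      ≤ 1) ∧
    Set.InjOn (harmMap (fun n => a n * A n / n) (fun n => b n * B n / n))
      (Metric.ball (0 : ℂ) 1) ∧
    Convex ℝ (harmMap (fun n => a n * A n / n) (fun n => b n * B n / n) ''
      Metric.ball (0 : ℂ) 1) :=
  integral_convolution_univalent_convex_general lam hlam a b A B habSum hF hA hB
end
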